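/- arXiv:2009.14774 — 12 statements merged into one kernel-verified Lean document; each statement's English description precedes it below -/
import Mathlib

section
/- Let f : ℝ^d → ℝ be a convex differentiable function and β* ∈ ℝ^d. Suppose f is locally κ-strongly convex at β* within radius R > 0, i.e., for all u with ‖u‖ ≤ R, f(β* + u) ≥ f(β*) + ⟨∇f(β*), u⟩ + (κ/2)‖u‖². If ‖∇f(β*)‖ < (1/2)·R·κ, then every vector β with f(β) ≤ f(β*) satisfies ‖β − β*‖ ≤ 2‖∇f(β*)‖/κ. -/
/-!
The sublevel set `{u | f (β* + u) ≤ f β*}` is star-shaped around `0` by convexity. Inside the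
ball of radius `R`, strong convexity and Cauchy–Schwarz give `κ/2 ‖u‖² ≤ ‖∇f(β*)‖ ‖u‖`, so the
sublevel set meets that ball only within the smaller radius `r = 2‖∇f(β*)‖/κ < R`. A star-shaped
set cannot then reach beyond `r` at all: rescaling a far point onto the sphere of radius
`min ‖v‖ R` would produce a point of the set in the ball but outside radius `r`.
-/

open scoped RealInnerProductSpace

theorem ConvexOn.starConvex_translate_sublevel {E : Type*} [AddCommGroup E] [Module ℝ E]
    {f : E → ℝ} (hf : ConvexOn ℝ Set.univ f) (x : E) :
    StarConvex ℝ 0 {u | f (x + u) ≤ f x} := by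
  have hconv : Convex ℝ {u | f (x + u) ≤ f x} := by
    simpa using (hf.translate_right x).convex_le (f x)
  exact hconv.starConvex (by simp)

theorem StarConvex.norm_le_of_norm_le_of_lt {E : Type*} [NormedAddCommGroup E]
    [NormedSpace ℝ E] {S : Set E} {r R : ℝ} (hS : StarConvex ℝ 0 S) (hr : 0 ≤ r) (hrR : r < R)
    (hball : ∀ u ∈ S, ‖u‖ ≤ R → ‖u‖ ≤ r) {v : E} (hv : v ∈ S) : ‖v‖ ≤ r := by
  by_contra! hvr
  have hv₀ : 0 < ‖v‖ := hr.trans_lt hvr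
  set s := min ‖v‖ R
  have hs₀ : 0 < s := lt_min hv₀ (hr.trans_lt hrR)
  have hsv : s / ‖v‖ ≤ 1 := (div_le_one hv₀).2 (min_le_left _ _)
  have hnorm : ‖(s / ‖v‖) • v‖ = s := by
    rw [norm_smul, Real.norm_of_nonneg (by positivity), div_mul_cancel₀ _ hv₀.ne']
  have hs : s ≤ r := by
    simpa only [hnorm] using
      hball _ (hS.smul_mem hv (by positivity) hsv) (hnorm.trans_le (min_le_right _ _))
  exact (lt_min hvr hrR).not_ge hs

theorem norm_le_of_inner_add_mul_norm_sq_nonpos {E : Type*} [NormedAddCommGroup E]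
    [InnerProductSpace ℝ E] {g u : E} {κ : ℝ} (hκ : 0 < κ)
    (h : ⟪g, u⟫ + κ / 2 * ‖u‖ ^ 2 ≤ 0) : ‖u‖ ≤ 2 * ‖g‖ / κ := by
  have hcs : -(‖g‖ * ‖u‖) ≤ ⟪g, u⟫ := neg_le_of_abs_le (abs_real_inner_le_norm g u)
  have hquad : κ / 2 * ‖u‖ ^ 2 ≤ ‖g‖ * ‖u‖ := by linarith
  rw [le_div_iff₀ hκ]
  rcases (norm_nonneg u).eq_or_lt with hu | hu
  · rw [← hu, zero_mul]; positivity
  · nlinarith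

theorem huber_error_bound_from_strong_convexity_general {d : ℕ}
    (f : EuclideanSpace ℝ (Fin d) → ℝ)
    (hconv : ConvexOn ℝ Set.univ f)
    (βstar : EuclideanSpace ℝ (Fin d)) (κ R : ℝ) (hκ : 0 < κ)
    (hsc : ∀ u : EuclideanSpace ℝ (Fin d), ‖u‖ ≤ R →
      f βstar + ⟪gradient f βstar, u⟫ + κ / 2 * ‖u‖ ^ 2 ≤ f (βstar + u))
    (hgrad : ‖gradient f βstar‖ < 1 / 2 * R * κ) :
    ∀ β : EuclideanSpace ℝ (Fin d), f β ≤ f βstar →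
      ‖β - βstar‖ ≤ 2 * ‖gradient f βstar‖ / κ := by
  intro β hβ
  have hrR : 2 * ‖gradient f βstar‖ / κ < R := by
    rw [div_lt_iff₀ hκ]
    linarith
  refine (hconv.starConvex_translate_sublevel βstar).norm_le_of_norm_le_of_lt (by positivity) hrR
    (fun u (hu : f (βstar + u) ≤ f βstar) huR =>
      norm_le_of_inner_add_mul_norm_sq_nonpos hκ (by linarith [hsc u huR]))
    (by simpa using hβ)

theorem huber_error_bound_from_strong_convexity {d : ℕ}
    (f : EuclideanSpace ℝ (Fin d) → ℝ)
    (hconv : ConvexOn ℝ Set.univ f) (hdiff : Differentiable ℝ f)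
    (βstar : EuclideanSpace ℝ (Fin d)) (κ R : ℝ) (hκ : 0 < κ) (hR : 0 < R)
    (hsc : ∀ u : EuclideanSpace ℝ (Fin d), ‖u‖ ≤ R →
      f βstar + ⟪gradient f βstar, u⟫ + κ / 2 * ‖u‖ ^ 2 ≤ f (βstar + u))
    (hgrad : ‖gradient f βstar‖ < 1 / 2 * R * κ) :
    ∀ β : EuclideanSpace ℝ (Fin d), f β ≤ f βstar →
      ‖β - βstar‖ ≤ 2 * ‖gradient f βstar‖ / κ :=
  huber_error_bound_from_strong_convexity_general f hconv βstar κ R hκ hsc hgrad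
end

section
/- Let f : ℝ^d → ℝ be convex differentiable, locally κ-strongly convex at β* within radius R > 0. If ‖∇f(β*)‖ < 0.49·R·κ, then every vector β with f(β) ≤ f(β*) + ε, where ε = 0.01·‖∇f(β*)‖²/κ, satisfies ‖β − β*‖ ≤ 2.01·‖∇f(β*)‖/κ. -/
/-!
Write `G = ‖∇f(β*)‖` and `r = 2.01 G / κ < R`. By Cauchy–Schwarz, local strong convexity gives
`f(β* + v) ≥ f(β*) - G s + κ s² / 2` on every sphere `‖v‖ = s ≤ R`, and for `s > r` this exceeds
`f(β*) + 0.01 G² / κ`. A convex function that exceeds a level `c ≥ f(β*)` on a sphere around `β*`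
stays above `c` outside it, so the sublevel set lies in every such ball, hence in the ball of radius `r`.
-/

open scoped RealInnerProductSpace

theorem ConvexOn.norm_sub_le_of_lt_on_sphere {E : Type*} [NormedAddCommGroup E] [NormedSpace ℝ E]
    {f : E → ℝ} (hf : ConvexOn ℝ Set.univ f) {x y : E} {c s : ℝ} (hs : 0 ≤ s) (hx : f x ≤ c)
    (hsphere : ∀ v : E, ‖v‖ = s → c < f (x + v)) (hy : f y ≤ c) : ‖y - x‖ ≤ s := by
  by_contra! hlt
  have hpos : 0 < ‖y - x‖ := hs.trans_lt hlt
  set t := s / ‖y - x‖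
  have ht0 : 0 ≤ t := div_nonneg hs hpos.le
  have ht1 : t ≤ 1 := (div_le_one hpos).mpr hlt.le
  have hnorm : ‖t • (y - x)‖ = s := by
    rw [norm_smul, Real.norm_of_nonneg ht0, div_mul_cancel₀ _ hpos.ne']
  have hseg : x + t • (y - x) = (1 - t) • x + t • y := by module
  have hconv := hf.2 (Set.mem_univ x) (Set.mem_univ y) (sub_nonneg.mpr ht1) ht0 (by ring)
  rw [← hseg, smul_eq_mul, smul_eq_mul] at hconv
  linarith [hsphere _ hnorm, mul_le_mul_of_nonneg_left hx (sub_nonneg.mpr ht1),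
    mul_le_mul_of_nonneg_left hy ht0]

theorem huber_quadratic_gap {κ G s : ℝ} (hκ : 0 < κ) (hG : 0 ≤ G) (hs : 2.01 * G / κ < s) :
    0.01 * G ^ 2 / κ < κ / 2 * s ^ 2 - G * s := by
  rw [div_lt_iff₀ hκ] at hs
  rw [div_lt_iff₀ hκ]
  -- with `x = κ s`: `x² / 2 - G x - 0.01 G² = (x - 2.01 G)(x + 0.01 G) / 2 + 0.00005 G²`
  nlinarith [mul_pos (sub_pos.mpr hs) (by linarith : 0 < κ * s + 0.01 * G)]

theorem huber_error_bound_from_strong_convexity_approx_general {d : ℕ}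
    (f : EuclideanSpace ℝ (Fin d) → ℝ)
    (hconv : ConvexOn ℝ Set.univ f)
    (βstar : EuclideanSpace ℝ (Fin d)) (κ R : ℝ) (hκ : 0 < κ)
    (hsc : ∀ u : EuclideanSpace ℝ (Fin d), ‖u‖ ≤ R →
      f βstar + ⟪gradient f βstar, u⟫ + κ / 2 * ‖u‖ ^ 2 ≤ f (βstar + u))
    (hgrad : ‖gradient f βstar‖ < 0.49 * R * κ) :
    ∀ β : EuclideanSpace ℝ (Fin d),
      f β ≤ f βstar + 0.01 * ‖gradient f βstar‖ ^ 2 / κ →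
      ‖β - βstar‖ ≤ 2.01 * ‖gradient f βstar‖ / κ := by
  intro β hβ
  set G := ‖gradient f βstar‖
  have hr0 : 0 ≤ 2.01 * G / κ := by positivity
  have hrR : 2.01 * G / κ < R := by
    rw [div_lt_iff₀ hκ]
    nlinarith [norm_nonneg (gradient f βstar)]
  have hball : ∀ s, 2.01 * G / κ < s → s ≤ R → ‖β - βstar‖ ≤ s := fun s hrs hsR =>
    hconv.norm_sub_le_of_lt_on_sphere (hr0.trans hrs.le)
      (le_add_of_nonneg_right (by positivity)) (fun v hv => by
        have hcs := neg_le_of_abs_le (abs_real_inner_le_norm (gradient f βstar) v)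
        have hlow := hsc v (hv.trans_le hsR)
        rw [hv] at hcs hlow
        linarith [huber_quadratic_gap hκ (norm_nonneg _) hrs]) hβ
  exact le_of_forall_gt_imp_ge_of_dense fun s hs =>
    (hball _ (lt_min hs hrR) (min_le_right _ _)).trans (min_le_left _ _)

theorem huber_error_bound_from_strong_convexity_approx {d : ℕ}
    (f : EuclideanSpace ℝ (Fin d) → ℝ)
    (hconv : ConvexOn ℝ Set.univ f) (hdiff : Differentiable ℝ f)
    (βstar : EuclideanSpace ℝ (Fin d)) (κ R : ℝ) (hκ : 0 < κ) (hR : 0 < R)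
    (hsc : ∀ u : EuclideanSpace ℝ (Fin d), ‖u‖ ≤ R →
      f βstar + ⟪gradient f βstar, u⟫ + κ / 2 * ‖u‖ ^ 2 ≤ f (βstar + u))
    (hgrad : ‖gradient f βstar‖ < 0.49 * R * κ) :
    ∀ β : EuclideanSpace ℝ (Fin d),
      f β ≤ f βstar + 0.01 * ‖gradient f βstar‖ ^ 2 / κ →
      ‖β - βstar‖ ≤ 2.01 * ‖gradient f βstar‖ / κ :=
  huber_error_bound_from_strong_convexity_approx_general f hconv βstar κ R hκ hsc hgrad
end

section
/- For all h, η ∈ ℝ, the Huber penalty Φ satisfies Φ(η + h) − Φ(η) − Φ'(η)·h = h² · ∫₀¹ (1 − t) · 1[|η + t·h| ≤ 2] dt ≥ (1/2) · 1[|η| ≤ 1] · 1[|h| ≤ 1] · h². -/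
/-- The Huber penalty with transition points `±2`. -/
noncomputable def huberPenalty (t : ℝ) : ℝ := if |t| ≤ 2 then t ^ 2 / 2 else 2 * |t| - 2

/-- The derivative of the Huber penalty. -/
noncomputable def huberPenalty' (t : ℝ) : ℝ := Real.sign t * min |t| 2

/-!
Both `Φ` and `Φ'` are continuous, and away from the kinks `±2` they are smooth with
`Φ'' = 1[|x| ≤ 2]`. Taylor's formula with integral remainder follows from the fundamental theorem
of calculus for `g t = Φ (η + t h) + (1 - t) h Φ' (η + t h)`, whose derivative is
`(1 - t) h² Φ'' (η + t h)`; that theorem tolerates a countable exceptional set, so the kinks are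
harmless. If `|η|, |h| ≤ 1` the segment `η + t h` stays in `[-2, 2]`, and the remainder integral
is `∫₀¹ (1 - t) dt = 1/2`.
-/

open MeasureTheory Filter Topology

theorem taylor_integral_remainder_of_hasDerivAt_off_countable {f f' f'' : ℝ → ℝ} {s : Set ℝ}
    (hs : s.Countable) (hf : Continuous f) (hf' : Continuous f')
    (hderiv : ∀ x ∉ s, HasDerivAt f (f' x) x) (hderiv' : ∀ x ∉ s, HasDerivAt f' (f'' x) x)
    (a h : ℝ) (hint : IntervalIntegrable (fun t => (1 - t) * f'' (a + t * h)) volume 0 1) :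
    f (a + h) - f a - f' a * h = h ^ 2 * ∫ t in (0:ℝ)..1, (1 - t) * f'' (a + t * h) := by
  rcases eq_or_ne h 0 with rfl | hh
  · simp
  have hline (t : ℝ) : HasDerivAt (fun u => a + u * h) h t := by
    simpa using ((hasDerivAt_id t).mul_const h).const_add a
  have hs' : ((fun t => a + t * h) ⁻¹' s).Countable :=
    hs.preimage fun t u htu => by simpa [hh] using htu
  have key := integral_eq_of_hasDerivAt_off_countable_of_le
    (fun t => f (a + t * h) + (1 - t) * h * f' (a + t * h))
    (fun t => h ^ 2 * ((1 - t) * f'' (a + t * h))) zero_le_one hs' (by fun_prop) ?_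
    (hint.const_mul _)
  · rw [intervalIntegral.integral_const_mul] at key
    simp only [key]
    ring_nf
  · rintro t ⟨-, ht⟩
    refine (((hderiv _ ht).comp t (hline t)).add
      ((((hasDerivAt_id t).const_sub 1).mul_const h).mul
        ((hderiv' _ ht).comp t (hline t)))).congr_deriv ?_
    simp only [Function.comp_apply, id]
    ring

lemma huberPenalty_of_abs_le {x : ℝ} (hx : |x| ≤ 2) : huberPenalty x = x ^ 2 / 2 := if_pos hx

lemma huberPenalty_of_two_le {x : ℝ} (hx : 2 ≤ x) : huberPenalty x = 2 * x - 2 := by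
  rw [huberPenalty, abs_of_nonneg (by linarith)]
  split_ifs with h
  · obtain rfl : x = 2 := le_antisymm h hx
    norm_num
  · rfl

lemma huberPenalty_of_le_neg_two {x : ℝ} (hx : x ≤ -2) : huberPenalty x = -2 * x - 2 := by
  rw [huberPenalty, abs_of_nonpos (by linarith)]
  split_ifs with h
  · obtain rfl : x = -2 := by linarith
    norm_num
  · ring

lemma huberPenalty'_eq_max_min (x : ℝ) : huberPenalty' x = max (-2) (min x 2) := by
  rcases lt_trichotomy x 0 with hx | rfl | hx
  · rw [huberPenalty', Real.sign_of_neg hx, abs_of_neg hx, min_def, min_def, max_def]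
    split_ifs <;> linarith
  · simp [huberPenalty']
  · rw [huberPenalty', Real.sign_of_pos hx, abs_of_pos hx, min_def, max_def]
    split_ifs <;> linarith

lemma huberPenalty'_of_abs_le {x : ℝ} (hx : |x| ≤ 2) : huberPenalty' x = x := by
  rw [huberPenalty'_eq_max_min, min_eq_left (abs_le.1 hx).2, max_eq_right (abs_le.1 hx).1]

lemma huberPenalty'_of_two_le {x : ℝ} (hx : 2 ≤ x) : huberPenalty' x = 2 := by
  rw [huberPenalty'_eq_max_min, min_eq_right hx]
  norm_num

lemma huberPenalty'_of_le_neg_two {x : ℝ} (hx : x ≤ -2) : huberPenalty' x = -2 := by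
  rw [huberPenalty'_eq_max_min, min_eq_left (by linarith), max_eq_left hx]

lemma continuous_huberPenalty : Continuous huberPenalty :=
  Continuous.if_le (by fun_prop) (by fun_prop) continuous_abs continuous_const fun x hx => by
    norm_num [← sq_abs x, hx]

lemma continuous_huberPenalty' : Continuous huberPenalty' := by
  simpa only [funext huberPenalty'_eq_max_min] using by fun_prop

/-- The value at the kinks `±2`, where `huberPenalty'` is not differentiable, is immaterial. -/
noncomputable def huberPenalty'' (x : ℝ) : ℝ := if |x| ≤ 2 then 1 else 0

lemma hasDerivAt_huberPenalty {x : ℝ} (hx : |x| ≠ 2) :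
    HasDerivAt huberPenalty (huberPenalty' x) x := by
  rcases hx.lt_or_gt with hx | hx
  · have hev : huberPenalty =ᶠ[𝓝 x] fun y => y ^ 2 / 2 :=
      (continuous_abs.continuousAt.eventually_lt continuousAt_const hx).mono
        fun y hy => huberPenalty_of_abs_le hy.le
    rw [huberPenalty'_of_abs_le hx.le]
    exact (((hasDerivAt_pow 2 x).div_const 2).congr_deriv (by ring)).congr_of_eventuallyEq hev
  rcases lt_abs.1 hx with hx | hx
  · have hev : huberPenalty =ᶠ[𝓝 x] fun y => 2 * y - 2 :=
      (eventually_gt_nhds hx).mono fun y hy => huberPenalty_of_two_le hy.le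
    rw [huberPenalty'_of_two_le hx.le]
    exact (((hasDerivAt_id x).const_mul 2).sub_const 2 |>.congr_deriv (by simp))
      |>.congr_of_eventuallyEq hev
  · have hev : huberPenalty =ᶠ[𝓝 x] fun y => -2 * y - 2 :=
      (eventually_lt_nhds (by linarith : x < -2)).mono fun y hy =>
        huberPenalty_of_le_neg_two hy.le
    rw [huberPenalty'_of_le_neg_two (by linarith)]
    exact (((hasDerivAt_id x).const_mul (-2)).sub_const 2 |>.congr_deriv (by simp))
      |>.congr_of_eventuallyEq hev

lemma hasDerivAt_huberPenalty' {x : ℝ} (hx : |x| ≠ 2) :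
    HasDerivAt huberPenalty' (huberPenalty'' x) x := by
  rcases hx.lt_or_gt with hx | hx
  · have hev : huberPenalty' =ᶠ[𝓝 x] id :=
      (continuous_abs.continuousAt.eventually_lt continuousAt_const hx).mono
        fun y hy => huberPenalty'_of_abs_le hy.le
    rw [huberPenalty'', if_pos hx.le]
    exact (hasDerivAt_id x).congr_of_eventuallyEq hev
  rw [huberPenalty'', if_neg hx.not_ge]
  rcases lt_abs.1 hx with hx | hx
  · exact (hasDerivAt_const x 2).congr_of_eventuallyEq
      ((eventually_gt_nhds hx).mono fun y hy => huberPenalty'_of_two_le hy.le)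
  · exact (hasDerivAt_const x (-2)).congr_of_eventuallyEq
      ((eventually_lt_nhds (by linarith : x < -2)).mono fun y hy =>
        huberPenalty'_of_le_neg_two hy.le)

lemma intervalIntegrable_huberPenalty''_comp (η h : ℝ) :
    IntervalIntegrable (fun t => (1 - t) * huberPenalty'' (η + t * h)) volume 0 1 := by
  refine IntervalIntegrable.continuousOn_mul ?_ (by fun_prop)
  refine (intervalIntegrable_const (c := (1:ℝ))).mono_fun ?_ (ae_of_all _ fun t => ?_)
  · exact (Measurable.ite (measurableSet_le (by fun_prop) measurable_const) measurable_const
      measurable_const).aestronglyMeasurable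
  · simp only [huberPenalty'']
    split_ifs <;> simp

lemma integral_huberPenalty''_comp_nonneg (η h : ℝ) :
    0 ≤ ∫ t in (0:ℝ)..1, (1 - t) * huberPenalty'' (η + t * h) :=
  intervalIntegral.integral_nonneg zero_le_one fun t ht =>
    mul_nonneg (by linarith [ht.2]) (by unfold huberPenalty''; split_ifs <;> norm_num)

lemma integral_huberPenalty''_comp_of_abs_le_one {η h : ℝ} (hη : |η| ≤ 1) (hh : |h| ≤ 1) :
    ∫ t in (0:ℝ)..1, (1 - t) * huberPenalty'' (η + t * h) = 1 / 2 := by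
  have hquad : ∀ t ∈ Set.uIcc (0:ℝ) 1, (1 - t) * huberPenalty'' (η + t * h) = 1 - t := by
    intro t ht
    rw [Set.uIcc_of_le zero_le_one] at ht
    have : |η + t * h| ≤ 2 := calc
      |η + t * h| ≤ |η| + t * |h| := by
        simpa [abs_mul, abs_of_nonneg ht.1] using abs_add_le η (t * h)
      _ ≤ 1 + 1 * 1 := by gcongr; exact ht.2
      _ = 2 := by norm_num
    rw [huberPenalty'', if_pos this, mul_one]
  rw [intervalIntegral.integral_congr hquad, intervalIntegral.integral_sub intervalIntegrable_const
    intervalIntegral.intervalIntegrable_id, integral_id]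
  norm_num

theorem second_order_behavior_of_huber_penalty (h η : ℝ) :
    (huberPenalty (η + h) - huberPenalty η - huberPenalty' η * h
      = h ^ 2 * ∫ t in (0:ℝ)..1, (1 - t) * (if |η + t * h| ≤ 2 then (1:ℝ) else 0)) ∧
    (1 / 2 * (if |η| ≤ 1 then (1:ℝ) else 0) * (if |h| ≤ 1 then (1:ℝ) else 0) * h ^ 2
      ≤ h ^ 2 * ∫ t in (0:ℝ)..1, (1 - t) * (if |η + t * h| ≤ 2 then (1:ℝ) else 0)) := by
  have off_kinks : ∀ x ∉ ({2, -2} : Set ℝ), |x| ≠ 2 := fun x hx habs =>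
    hx ((abs_eq zero_le_two).1 habs)
  refine ⟨taylor_integral_remainder_of_hasDerivAt_off_countable (Set.toFinite _).countable
    continuous_huberPenalty continuous_huberPenalty'
    (fun x hx => hasDerivAt_huberPenalty (off_kinks x hx))
    (fun x hx => hasDerivAt_huberPenalty' (off_kinks x hx)) η h
    (intervalIntegrable_huberPenalty''_comp η h), ?_⟩
  have hnonneg := mul_nonneg (sq_nonneg h) (integral_huberPenalty''_comp_nonneg η h)
  change _ ≤ h ^ 2 * ∫ t in (0:ℝ)..1, (1 - t) * huberPenalty'' (η + t * h)
  split_ifs with hη hh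
  · rw [integral_huberPenalty''_comp_of_abs_le_one hη hh]
    linarith
  all_goals simpa using hnonneg
end

section
/- Let V ⊆ ℝⁿ be a vector subspace such that for some ρ, R ∈ (0,1), every v ∈ V satisfies Σᵢ 1[vᵢ² ≤ ‖v‖²/(R²n)]·vᵢ² ≥ ρ²‖v‖². Then V is ((ρ²/4)·R²·n, ρ/2)-spread; in fact it is ((ρ²/4)·R²·n, √(3/4)·ρ)-spread. -/
/-- A subspace `V ⊆ ℝⁿ` is `(m, ρ)`-spread if for every `v ∈ V` and every subset
`S ⊆ [n]` with `|S| ≥ n − m`, one has `‖v_S‖ ≥ ρ‖v‖`. -/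
def IsSpread {n : ℕ} (V : Submodule ℝ (Fin n → ℝ)) (m ρ : ℝ) : Prop :=
  ∀ v ∈ V, ∀ S : Finset (Fin n), (n : ℝ) - m ≤ (S.card : ℝ) →
    ρ * Real.sqrt (∑ i, v i ^ 2) ≤ Real.sqrt (∑ i ∈ S, v i ^ 2)

/-! The coordinates with `vᵢ² ≤ ‖v‖²/(R²n)` carry at least `ρ²‖v‖²` of the mass of `v`. At most
`ρ²R²n/4` coordinates lie outside `S`, and those among them that are small contribute at most
`ρ²‖v‖²/4`, so `S` keeps at least `(3/4)ρ²‖v‖²`. -/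

open Finset

theorem sum_ite_le_le_sum_add_card_compl_nsmul {ι M : Type*} [Fintype ι] [DecidableEq ι]
    [AddCommMonoid M] [LinearOrder M] [IsOrderedAddMonoid M]
    (f : ι → M) {t : M} (ht : 0 ≤ t) (S : Finset ι) :
    ∑ i, (if f i ≤ t then f i else 0) ≤ ∑ i ∈ S, f i + #Sᶜ • t := by
  rw [← sum_add_sum_compl S, ← sum_const]
  gcongr with i _ i _
  · split_ifs with hi
    · rfl
    · exact ht.trans (not_le.mp hi).le
  · split_ifs with hi
    · exact hi
    · exact ht

theorem IsSpread.mono_right {n : ℕ} {V : Submodule ℝ (Fin n → ℝ)} {m ρ ρ' : ℝ}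
    (hV : IsSpread V m ρ) (hρ : ρ' ≤ ρ) : IsSpread V m ρ' :=
  fun v hv S hS => (mul_le_mul_of_nonneg_right hρ (Real.sqrt_nonneg _)).trans (hV v hv S hS)

theorem isSpread_of_sq_mul_sum_sq_le_sum_small_sq {n : ℕ} (V : Submodule ℝ (Fin n → ℝ))
    {ρ : ℝ} (hρ : 0 ≤ ρ) (R : ℝ)
    (h : ∀ v ∈ V, ρ ^ 2 * ∑ i, v i ^ 2 ≤
      ∑ i, (if v i ^ 2 ≤ (∑ j, v j ^ 2) / (R ^ 2 * n) then v i ^ 2 else 0)) :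
    IsSpread V (ρ ^ 2 / 4 * R ^ 2 * n) (Real.sqrt (3 / 4) * ρ) := by
  intro v hv S hS
  set s := ∑ i, v i ^ 2
  have hcard : (#Sᶜ : ℝ) ≤ ρ ^ 2 / 4 * R ^ 2 * n := by
    rw [card_compl, Nat.cast_sub (card_le_univ S), Fintype.card_fin]
    linarith
  -- `(R²n)/(R²n) ≤ 1` also covers the junk case `R²n = 0`.
  have hsmall : #Sᶜ * (s / (R ^ 2 * n)) ≤ ρ ^ 2 / 4 * s :=
    calc #Sᶜ * (s / (R ^ 2 * n))
        ≤ ρ ^ 2 / 4 * R ^ 2 * n * (s / (R ^ 2 * n)) := by gcongr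
      _ = ρ ^ 2 / 4 * s * ((R ^ 2 * n) / (R ^ 2 * n)) := by ring
      _ ≤ ρ ^ 2 / 4 * s := mul_le_of_le_one_right (by positivity) (div_self_le_one _)
  have hsplit := sum_ite_le_le_sum_add_card_compl_nsmul (fun i => v i ^ 2)
    (t := s / (R ^ 2 * n)) (by positivity) S
  rw [nsmul_eq_mul] at hsplit
  have hmass : 3 / 4 * ρ ^ 2 * s ≤ ∑ i ∈ S, v i ^ 2 := by linarith [h v hv]
  calc Real.sqrt (3 / 4) * ρ * Real.sqrt s = Real.sqrt (3 / 4 * ρ ^ 2 * s) := by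
        rw [Real.sqrt_mul (by positivity), Real.sqrt_mul (by positivity), Real.sqrt_sq hρ]
    _ ≤ Real.sqrt (∑ i ∈ S, v i ^ 2) := Real.sqrt_le_sqrt hmass

theorem min_eigenvalue_implies_spread_general {n : ℕ} (V : Submodule ℝ (Fin n → ℝ))
    (ρ R : ℝ) (hρ : ρ ∈ Set.Ioo (0:ℝ) 1)
    (h : ∀ v ∈ V, ρ ^ 2 * ∑ i, v i ^ 2 ≤
      ∑ i, (if v i ^ 2 ≤ (∑ j, v j ^ 2) / (R ^ 2 * n) then v i ^ 2 else 0)) :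
    IsSpread V (ρ ^ 2 / 4 * R ^ 2 * n) (ρ / 2) ∧
    IsSpread V (ρ ^ 2 / 4 * R ^ 2 * n) (Real.sqrt (3 / 4) * ρ) := by
  have hspread := isSpread_of_sq_mul_sum_sq_le_sum_small_sq V hρ.1.le R h
  refine ⟨hspread.mono_right ?_, hspread⟩
  have hhalf : 1 / 2 ≤ Real.sqrt (3 / 4) := Real.le_sqrt_of_sq_le (by norm_num)
  rw [div_eq_mul_one_div, mul_comm]
  exact mul_le_mul_of_nonneg_right hhalf hρ.1.le

theorem min_eigenvalue_implies_spread {n : ℕ} (V : Submodule ℝ (Fin n → ℝ))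
    (ρ R : ℝ) (hρ : ρ ∈ Set.Ioo (0:ℝ) 1) (hR : R ∈ Set.Ioo (0:ℝ) 1)
    (h : ∀ v ∈ V, ρ ^ 2 * ∑ i, v i ^ 2 ≤
      ∑ i, (if v i ^ 2 ≤ (∑ j, v j ^ 2) / (R ^ 2 * n) then v i ^ 2 else 0)) :
    IsSpread V (ρ ^ 2 / 4 * R ^ 2 * n) (ρ / 2) ∧
    IsSpread V (ρ ^ 2 / 4 * R ^ 2 * n) (Real.sqrt (3 / 4) * ρ) :=
  min_eigenvalue_implies_spread_general V ρ R hρ h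
end

section
/- Let m ∈ [n], A ⊂ [n], γ₁, γ₂ > 0. Let v ∈ ℝⁿ satisfy Σ_{i∈A} vᵢ² ≤ γ₁²‖v‖² and, for every set M ⊂ [n] of size m, Σ_{i∈M} vᵢ² ≤ γ₂²‖v‖². Then Σ_{i∈[n]∖A} |vᵢ| ≥ ((1 − γ₁² − γ₂²)/γ₂)·√m·‖v‖. -/
/-!
Let `M` index the `m` largest coordinates of `v` in absolute value. Every coordinate outside `M`
is at most the root mean square over `M`, hence `√m · |vᵢ| ≤ γ₂ ‖v‖` for `i ∉ M`. On `Aᶜ \ M`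
this turns `vᵢ² ≤ |vᵢ| · γ₂ ‖v‖ / √m` into an `ℓ²`-versus-`ℓ¹` comparison, while the squares on
`Aᶜ \ M` still carry at least `(1 - γ₁² - γ₂²) ‖v‖²` because `A` and `M` carry at most
`γ₁² ‖v‖²` and `γ₂² ‖v‖²`.
-/

open Finset

lemma Fintype.exists_card_eq_forall_notMem_le {α β : Type*} [Fintype α] [DecidableEq α]
    [LinearOrder β] (f : α → β) {m : ℕ} (hm : m ≤ Fintype.card α) :
    ∃ M : Finset α, #M = m ∧ ∀ i ∉ M, ∀ j ∈ M, f i ≤ f j := by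
  induction m with
  | zero => exact ⟨∅, rfl, by simp⟩
  | succ k ih =>
    obtain ⟨M, hcard, hM⟩ := ih (Nat.le_of_succ_le hm)
    have hne : Mᶜ.Nonempty := by
      rw [← Finset.card_pos, card_compl, hcard]
      omega
    obtain ⟨j₀, hj₀, hj₀_max⟩ := Mᶜ.exists_max_image f hne
    have hj₀M : j₀ ∉ M := mem_compl.mp hj₀
    refine ⟨insert j₀ M, by rw [card_insert_of_notMem hj₀M, hcard], fun i hi j hj ↦ ?_⟩
    rcases mem_insert.mp hj with rfl | hjM
    · exact hj₀_max i (mem_compl.mpr fun h ↦ hi (mem_insert_of_mem h))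
    · exact hM i (fun h ↦ hi (mem_insert_of_mem h)) j hjM

lemma sqrt_card_mul_abs_le_of_sum_sq_le {ι : Type*} {M : Finset ι} {v : ι → ℝ} {x c : ℝ}
    (hx : ∀ j ∈ M, |x| ≤ |v j|) (hM : ∑ j ∈ M, v j ^ 2 ≤ c ^ 2) (hc : 0 ≤ c) :
    √(#M : ℝ) * |x| ≤ c := by
  refine abs_le_of_sq_le_sq' ?_ hc |>.2
  calc (√(#M : ℝ) * |x|) ^ 2 = #M • |x| ^ 2 := by
        rw [mul_pow, Real.sq_sqrt (Nat.cast_nonneg _), nsmul_eq_mul]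
    _ ≤ ∑ j ∈ M, v j ^ 2 := card_nsmul_le_sum _ _ _ fun j hj ↦ by
        rw [← sq_abs (v j)]
        exact pow_le_pow_left₀ (abs_nonneg x) (hx j hj) 2
    _ ≤ c ^ 2 := hM

lemma mul_sum_sq_le_mul_sum_abs {ι : Type*} {s : Finset ι} {v : ι → ℝ} {c d : ℝ}
    (h : ∀ i ∈ s, c * |v i| ≤ d) : c * ∑ i ∈ s, v i ^ 2 ≤ d * ∑ i ∈ s, |v i| := by
  rw [mul_sum, mul_sum]
  refine sum_le_sum fun i hi ↦ ?_
  rw [← sq_abs (v i), sq, ← mul_assoc]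
  exact mul_le_mul_of_nonneg_right (h i hi) (abs_nonneg _)

lemma sum_le_sum_add_sum_add_sum_compl_sdiff {ι : Type*} [Fintype ι] [DecidableEq ι]
    {f : ι → ℝ} (hf : ∀ i, 0 ≤ f i) (A M : Finset ι) :
    ∑ i, f i ≤ ∑ i ∈ A, f i + ∑ i ∈ M, f i + ∑ i ∈ Aᶜ \ M, f i := by
  have hinter : ∑ i ∈ Aᶜ ∩ M, f i ≤ ∑ i ∈ M, f i :=
    sum_le_sum_of_subset_of_nonneg inter_subset_right fun i _ _ ↦ hf i
  rw [← sum_add_sum_compl A, ← sum_inter_add_sum_sdiff Aᶜ M]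
  linarith

theorem l1_vs_l2_lower_bound_general {n : ℕ} (m : ℕ) (hmn : m ≤ n)
    (A : Finset (Fin n)) (γ₁ γ₂ : ℝ) (hγ₂ : 0 < γ₂)
    (v : Fin n → ℝ)
    (hA : ∑ i ∈ A, v i ^ 2 ≤ γ₁ ^ 2 * ∑ i, v i ^ 2)
    (hM : ∀ M : Finset (Fin n), M.card = m →
      ∑ i ∈ M, v i ^ 2 ≤ γ₂ ^ 2 * ∑ i, v i ^ 2) :
    (1 - γ₁ ^ 2 - γ₂ ^ 2) / γ₂ * Real.sqrt m * Real.sqrt (∑ i, v i ^ 2)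
      ≤ ∑ i ∈ Aᶜ, |v i| := by
  set S := ∑ i, v i ^ 2
  have hS : 0 ≤ S := sum_nonneg fun i _ ↦ sq_nonneg _
  rcases hS.eq_or_lt with hS0 | hSpos
  · rw [← hS0, Real.sqrt_zero, mul_zero]
    exact sum_nonneg fun i _ ↦ abs_nonneg _
  obtain ⟨M, rfl, htop⟩ :=
    Fintype.exists_card_eq_forall_notMem_le (fun i ↦ |v i|) (m := m) (by simpa using hmn)
  have hγS : γ₂ ^ 2 * S = (γ₂ * √S) ^ 2 := by rw [mul_pow, Real.sq_sqrt hS]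
  have hsmall : ∀ i ∈ Aᶜ \ M, √(#M : ℝ) * |v i| ≤ γ₂ * √S := fun i hi ↦
    sqrt_card_mul_abs_le_of_sum_sq_le (htop i (mem_sdiff.mp hi).2) (hγS ▸ hM M rfl) (by positivity)
  have hlarge : (1 - γ₁ ^ 2 - γ₂ ^ 2) * S ≤ ∑ i ∈ Aᶜ \ M, v i ^ 2 := by
    linarith [sum_le_sum_add_sum_add_sum_compl_sdiff (fun i ↦ sq_nonneg (v i)) A M, hM M rfl]
  have hsub : ∑ i ∈ Aᶜ \ M, |v i| ≤ ∑ i ∈ Aᶜ, |v i| :=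
    sum_le_sum_of_subset_of_nonneg sdiff_subset fun i _ _ ↦ abs_nonneg _
  have hγ₂S : 0 < γ₂ * √S := mul_pos hγ₂ (Real.sqrt_pos.mpr hSpos)
  refine le_of_mul_le_mul_right ?_ hγ₂S
  calc (1 - γ₁ ^ 2 - γ₂ ^ 2) / γ₂ * √(#M : ℝ) * √S * (γ₂ * √S)
      = √(#M : ℝ) * ((1 - γ₁ ^ 2 - γ₂ ^ 2) * S) := by
        field_simp
        rw [Real.sq_sqrt hS]
    _ ≤ √(#M : ℝ) * ∑ i ∈ Aᶜ \ M, v i ^ 2 := by gcongr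
    _ ≤ γ₂ * √S * ∑ i ∈ Aᶜ \ M, |v i| := mul_sum_sq_le_mul_sum_abs hsmall
    _ ≤ (∑ i ∈ Aᶜ, |v i|) * (γ₂ * √S) := by rw [mul_comm]; gcongr

theorem l1_vs_l2_lower_bound {n : ℕ} (m : ℕ) (hm : 1 ≤ m) (hmn : m ≤ n)
    (A : Finset (Fin n)) (γ₁ γ₂ : ℝ) (hγ₁ : 0 < γ₁) (hγ₂ : 0 < γ₂)
    (v : Fin n → ℝ)
    (hA : ∑ i ∈ A, v i ^ 2 ≤ γ₁ ^ 2 * ∑ i, v i ^ 2)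
    (hM : ∀ M : Finset (Fin n), M.card = m →
      ∑ i ∈ M, v i ^ 2 ≤ γ₂ ^ 2 * ∑ i, v i ^ 2) :
    (1 - γ₁ ^ 2 - γ₂ ^ 2) / γ₂ * Real.sqrt m * Real.sqrt (∑ i, v i ^ 2)
      ≤ ∑ i ∈ Aᶜ, |v i| :=
  l1_vs_l2_lower_bound_general m hmn A γ₁ γ₂ hγ₂ v hA hM
end

section
/- Suppose a vector v ∈ ℝⁿ satisfies: for every subset S ⊆ [n], Σ_{i∈S} |vᵢ| ≤ |S|·ln(en/|S|). Then ‖v‖ ≤ √(6n). -/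
/-!
Sort the entries by absolute value. The `n - j` largest entries all dominate the `j`-th smallest
one, so the hypothesis applied to them bounds the `k`-th largest entry by `1 + log (n / k)`.
It remains to show `∑_{k=1}^n (1 + log (n / k)) ^ 2 ≤ 6 n`, which follows by induction on `n`
from `∑_{k=1}^n log (n / k) = log (n ^ n / n!) ≤ n` and `log (n + 1) - log n ≤ 1 / n`.
-/

open Finset Real
open scoped Nat

section SortedEntries

variable {n : ℕ} (w : Fin n → ℝ) (g : ℕ → ℝ)

theorem sort_le_of_sum_le_card_mul
    (h : ∀ S : Finset (Fin n), S.Nonempty → ∑ i ∈ S, w i ≤ #S * g #S) (j : Fin n) :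
    w (Tuple.sort w j) ≤ g (n - j) := by
  set σ := Tuple.sort w
  set S := (Ici j).map σ.toEmbedding
  have hcard : #S = n - j := by rw [card_map, Fin.card_Ici]
  have hpos : (0 : ℝ) < #S := by rw [hcard]; exact_mod_cast Nat.sub_pos_of_lt j.isLt
  have hlower : #S * w (σ j) ≤ ∑ i ∈ S, w i := by
    rw [← nsmul_eq_mul]
    refine card_nsmul_le_sum S w _ fun x hx => ?_
    obtain ⟨i, hi, rfl⟩ := mem_map.1 hx
    exact Tuple.monotone_sort w (mem_Ici.1 hi)
  have hupper := h S ⟨σ j, mem_map_of_mem _ (mem_Ici.2 le_rfl)⟩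
  rw [← hcard]
  exact le_of_mul_le_mul_left (hlower.trans hupper) hpos

theorem sum_sq_le_of_sum_le_card_mul (hw : ∀ i, 0 ≤ w i)
    (h : ∀ S : Finset (Fin n), S.Nonempty → ∑ i ∈ S, w i ≤ #S * g #S) :
    ∑ i, w i ^ 2 ≤ ∑ k ∈ range n, g (k + 1) ^ 2 := by
  calc ∑ i, w i ^ 2 = ∑ j, w (Tuple.sort w j) ^ 2 := (Equiv.sum_comp _ (w · ^ 2)).symm
    _ ≤ ∑ j : Fin n, g (n - j) ^ 2 :=
      sum_le_sum fun j _ => pow_le_pow_left₀ (hw _) (sort_le_of_sum_le_card_mul w g h j) 2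
    _ = ∑ k ∈ range n, g (k + 1) ^ 2 := by
      rw [Fin.sum_univ_eq_sum_range (fun j => g (n - j) ^ 2), ← sum_range_reflect]
      refine sum_congr rfl fun k hk => ?_
      rw [show n - (n - 1 - k) = k + 1 by have := mem_range.1 hk; omega]

end SortedEntries

theorem sum_range_log_sub_log_le (m : ℕ) :
    ∑ k ∈ range m, (log m - log (k + 1)) ≤ m := by
  rcases m.eq_zero_or_pos with rfl | hm
  · simp
  have hm' : (0 : ℝ) < m := by exact_mod_cast hm
  have hfact : ∑ k ∈ range m, log ((k : ℝ) + 1) = log m ! := by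
    rw [← log_prod fun k _ => by positivity, ← prod_range_add_one_eq_factorial]
    push_cast
    rfl
  rw [sum_sub_distrib, sum_const, card_range, nsmul_eq_mul, hfact, ← log_pow,
    ← log_div (by positivity) (by positivity)]
  calc log ((m : ℝ) ^ m / m !) ≤ log (exp m) :=
        log_le_log (by positivity) (pow_div_factorial_le_exp _ hm'.le m)
    _ = m := log_exp _

theorem mul_log_succ_sub_log_le (m : ℕ) : m * (log (m + 1) - log m) ≤ 1 := by
  rcases m.eq_zero_or_pos with rfl | hm
  · simp
  have hm' : (0 : ℝ) < m := by exact_mod_cast hm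
  have h := log_le_sub_one_of_pos (x := (m + 1) / m) (by positivity)
  rw [log_div (by positivity) hm'.ne'] at h
  calc (m : ℝ) * (log (m + 1) - log m) ≤ m * ((m + 1) / m - 1) := by gcongr
    _ = 1 := by field_simp; ring

theorem sum_range_one_add_log_sub_log_sq_le (m : ℕ) :
    ∑ k ∈ range m, (1 + log m - log (k + 1)) ^ 2 ≤ 6 * (m : ℝ) := by
  induction m with
  | zero => simp
  | succ m ih =>
    rcases m.eq_zero_or_pos with rfl | hm
    · simp
    have hm' : (1 : ℝ) ≤ m := by exact_mod_cast hm
    set δ := log (m + 1) - log m with hδ_def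
    have hδ0 : 0 ≤ δ := sub_nonneg.2 (log_le_log (by positivity) (by linarith))
    have hmδ : m * δ ≤ 1 := mul_log_succ_sub_log_le m
    have hA := sum_range_log_sub_log_le m
    have hshift : ∑ k ∈ range m, (1 + log (m + 1) - log (k + 1)) ^ 2 =
        ∑ k ∈ range m, (1 + log m - log (k + 1)) ^ 2 +
          δ * (2 * m + 2 * ∑ k ∈ range m, (log m - log (k + 1)) + m * δ) := by
      have hterm : ∀ k : ℕ, (1 + log (m + 1) - log (k + 1)) ^ 2 =
          (1 + log m - log (k + 1)) ^ 2 + δ * (2 + 2 * (log m - log (k + 1)) + δ) := by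
        intro k; rw [hδ_def]; ring
      simp only [hterm, sum_add_distrib, ← mul_sum, sum_const, card_range, nsmul_eq_mul]
      ring
    have hcorr : δ * (2 * m + 2 * ∑ k ∈ range m, (log m - log (k + 1)) + m * δ) ≤ 5 := by
      -- `δ ≤ m * δ ≤ 1` and the bracket is at most `4 * m + 1`
      nlinarith
    rw [sum_range_succ]
    push_cast
    rw [hshift]
    linarith

theorem norm_of_log_spread_vector {n : ℕ} (v : Fin n → ℝ)
    (h : ∀ S : Finset (Fin n), S.Nonempty →
      ∑ i ∈ S, |v i| ≤ (S.card : ℝ) * Real.log (Real.exp 1 * n / S.card)) :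
    Real.sqrt (∑ i, v i ^ 2) ≤ Real.sqrt (6 * n) := by
  apply sqrt_le_sqrt
  calc ∑ i, v i ^ 2 = ∑ i, |v i| ^ 2 := by simp only [sq_abs]
    _ ≤ ∑ k ∈ range n, log (exp 1 * n / (k + 1 : ℕ)) ^ 2 :=
      sum_sq_le_of_sum_le_card_mul _ (fun k => log (exp 1 * n / k)) (fun _ => abs_nonneg _) h
    _ = ∑ k ∈ range n, (1 + log n - log (k + 1)) ^ 2 := by
      refine sum_congr rfl fun k hk => ?_
      have hn : (n : ℝ) ≠ 0 := Nat.cast_ne_zero.2 (by have := mem_range.1 hk; omega)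
      rw [log_div (by positivity) (by positivity), log_mul (exp_ne_zero 1) hn, log_exp]
      push_cast
      rfl
    _ ≤ 6 * n := sum_range_one_add_log_sub_log_sq_le n
end

section
/- Suppose vectors v, w ∈ ℝⁿ satisfy: for some t₁, t₂ ≥ 0 and every subset S ⊆ [n], Σ_{i∈S}|vᵢ| ≤ t₁ + |S|·ln(en/|S|) and Σ_{i∈S}|wᵢ| ≤ t₂ + |S|·ln(en/|S|). Then |⟨v, w⟩| ≤ t₁t₂ + (t₁ + t₂)·ln(en) + 6n. -/
/-!
Replacing `|v|` and `|w|` by their decreasing rearrangements `A`, `B` can only increase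
`∑ |vᵢ| |wᵢ|`. The hypothesis bounds the partial sums of `A` by `t₁ + m log (e n / m)`, which are
exactly the partial sums of `φ₁ = t₁ δ₀ + Δ`, where `Δₖ` is the forward difference of
`m ↦ m log (e n / m)`. Since `m log m` is convex, `Δ` is antitone, and `0 ≤ Δₖ ≤ log (e n / (k + 1))`
for `k < n`. Abel summation against antitone nonnegative weights gives
`∑ A B ≤ ∑ φ₁ B ≤ ∑ φ₁ φ₂ = t₁ t₂ + (t₁ + t₂) log (e n) + ∑ Δₖ²`, and comparing
`∑ log (e n / (k + 1))²` with `∫ log (e n / x)² dx` bounds the last sum by `5 n`.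
-/

open Finset Real

theorem sum_range_mul_le_sum_range_mul_of_sum_range_le {a f b : ℕ → ℝ} {n : ℕ}
    (hb : AntitoneOn b (Set.Iio n)) (hb₀ : ∀ k < n, 0 ≤ b k)
    (h : ∀ m ≤ n, ∑ k ∈ range m, a k ≤ ∑ k ∈ range m, f k) :
    ∑ k ∈ range n, a k * b k ≤ ∑ k ∈ range n, f k * b k := by
  have hD : ∀ m ≤ n, 0 ≤ ∑ k ∈ range m, (f k - a k) := fun m hm ↦ by
    simpa [sum_sub_distrib] using h m hm
  suffices 0 ≤ ∑ k ∈ range n, b k • (f k - a k) by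
    simpa [mul_sub, sum_sub_distrib, mul_comm] using this
  rw [sum_range_by_parts]
  refine sub_nonneg.2 (le_trans (sum_nonpos fun i hi ↦ ?_) ?_)
  · have hi : i + 1 < n := by rw [mem_range] at hi; omega
    exact smul_nonpos_of_nonpos_of_nonneg
      (sub_nonpos.2 (hb (Set.mem_Iio.2 (by omega)) (Set.mem_Iio.2 hi) (by omega))) (hD _ hi.le)
  · rcases n.eq_zero_or_pos with rfl | hn
    · simp
    · exact smul_nonneg (hb₀ _ (by omega)) (hD n le_rfl)

def decreasingSort {α : Type*} [LinearOrder α] {n : ℕ} (a : Fin n → α) : Equiv.Perm (Fin n) :=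
  Fin.revPerm.trans (Tuple.sort a)

theorem antitone_comp_decreasingSort {α : Type*} [LinearOrder α] {n : ℕ} (a : Fin n → α) :
    Antitone (a ∘ decreasingSort a) :=
  (Tuple.monotone_sort a).comp_antitone fun _ _ h ↦ Fin.rev_le_rev.2 h

noncomputable def decreasingRearrangement {n : ℕ} (a : Fin n → ℝ) (k : ℕ) : ℝ :=
  if h : k < n then a (decreasingSort a ⟨k, h⟩) else 0

section
variable {n : ℕ} (a : Fin n → ℝ)

theorem decreasingRearrangement_antitoneOn :
    AntitoneOn (decreasingRearrangement a) (Set.Iio n) := fun k hk m hm hkm ↦ by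
  simp only [Set.mem_Iio] at hk hm
  simp only [decreasingRearrangement, dif_pos hk, dif_pos hm]
  exact antitone_comp_decreasingSort a (Fin.mk_le_mk.2 hkm)

theorem decreasingRearrangement_nonneg (ha : ∀ i, 0 ≤ a i) (k : ℕ) :
    0 ≤ decreasingRearrangement a k := by
  unfold decreasingRearrangement
  split_ifs
  exacts [ha _, le_rfl]

theorem exists_card_eq_sum_eq_sum_range_decreasingRearrangement {m : ℕ} (hm : m ≤ n) :
    ∃ S : Finset (Fin n), S.card = m ∧
      ∑ i ∈ S, a i = ∑ k ∈ range m, decreasingRearrangement a k := by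
  refine ⟨univ.map ((Fin.castLEEmb hm).trans (decreasingSort a).toEmbedding), by simp, ?_⟩
  rw [sum_map, ← Fin.sum_univ_eq_sum_range]
  refine sum_congr rfl fun j _ ↦ ?_
  rw [decreasingRearrangement, dif_pos (j.2.trans_le hm)]
  rfl

theorem sum_range_decreasingRearrangement_mul (b : Fin n → ℝ) :
    ∑ k ∈ range n, decreasingRearrangement a k * decreasingRearrangement b k =
      ∑ i, a (decreasingSort a i) * b (decreasingSort b i) := by
  rw [← Fin.sum_univ_eq_sum_range]
  simp [decreasingRearrangement]

theorem sum_mul_le_sum_range_decreasingRearrangement_mul (b : Fin n → ℝ) :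
    ∑ i, a i * b i ≤
      ∑ k ∈ range n, decreasingRearrangement a k * decreasingRearrangement b k := by
  have := ((antitone_comp_decreasingSort a).monovary
    (antitone_comp_decreasingSort b)).sum_mul_comp_perm_le_sum_mul
    (σ := (decreasingSort a).trans (decreasingSort b).symm)
  simp only [Function.comp_apply, Equiv.trans_apply, Equiv.apply_symm_apply] at this
  rwa [Equiv.sum_comp (decreasingSort a) (fun i ↦ a i * b i),
    ← sum_range_decreasingRearrangement_mul] at this
end

theorem integral_sq_sub_log {L b : ℝ} (hb : 1 ≤ b) :
    ∫ x in (1 : ℝ)..b, (L - log x) ^ 2 =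
      b * ((L - log b) ^ 2 + 2 * (L - log b) + 2) - (L ^ 2 + 2 * L + 2) := by
  have hderiv : ∀ x ∈ Set.uIcc 1 b,
      HasDerivAt (fun x ↦ x * ((L - log x) ^ 2 + 2 * (L - log x) + 2)) ((L - log x) ^ 2) x := by
    intro x hx
    have hx₀ : x ≠ 0 := by rw [Set.uIcc_of_le hb] at hx; linarith [hx.1]
    have hlog := (hasDerivAt_log hx₀).const_sub L
    refine ((hasDerivAt_id' x).fun_mul
      (((hlog.fun_pow 2).add (hlog.const_mul 2)).add_const 2)).congr_deriv ?_
    simp only [Pi.add_apply]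
    field_simp
    ring
  rw [intervalIntegral.integral_eq_sub_of_hasDerivAt hderiv]
  · simp
  · refine ((continuousOn_const.sub (continuousOn_log.mono ?_)).pow 2).intervalIntegrable
    rw [Set.uIcc_of_le hb]
    exact fun x hx ↦ (zero_lt_one.trans_le hx.1).ne'

theorem sum_range_sq_sub_log_succ_le {L : ℝ} {n : ℕ} (hn : 0 < n) (hL : log n ≤ L) :
    ∑ k ∈ range n, (L - log (k + 1)) ^ 2 ≤ L ^ 2 + ∫ x in (1 : ℝ)..n, (L - log x) ^ 2 := by
  obtain ⟨n, rfl⟩ : ∃ m, n = m + 1 := ⟨n - 1, by omega⟩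
  have hanti : AntitoneOn (fun x ↦ (L - log x) ^ 2) (Set.Icc 1 (1 + n)) := by
    intro x hx y hy hxy
    have hy₀ : 0 ≤ L - log y := by
      have := log_le_log (by linarith [hy.1]) hy.2
      push_cast at hL; rw [add_comm] at this; linarith
    exact pow_le_pow_left₀ hy₀ (by linarith [log_le_log (by linarith [hx.1]) hxy]) 2
  have := hanti.sum_le_integral
  rw [sum_range_succ']
  push_cast at this ⊢
  simp only [zero_add, log_one, sub_zero, add_comm (1 : ℝ)] at this ⊢
  linarith

theorem log_add_one_le_mul_log_add_one_sub_mul_log {x : ℝ} (hx : 0 ≤ x) :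
    log (x + 1) ≤ (x + 1) * log (x + 1) - x * log x := by
  rcases hx.eq_or_lt with rfl | hx
  · simp
  · have := mul_le_mul_of_nonneg_left (log_le_log hx (lt_add_one x).le) hx.le
    linarith

theorem mul_log_add_one_sub_mul_log_le {x : ℝ} (hx : 0 ≤ x) :
    (x + 1) * log (x + 1) - x * log x ≤ log (x + 1) + 1 := by
  rcases hx.eq_or_lt with rfl | hx
  · simp
  · have h := log_le_sub_one_of_pos (div_pos (by linarith : 0 < x + 1) hx)
    rw [log_div (by linarith) hx.ne', div_sub_one hx.ne', add_sub_cancel_left] at h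
    have := mul_le_mul_of_nonneg_left h hx.le
    rw [mul_div_cancel₀ _ hx.ne'] at this
    linarith

theorem mul_log_div_eq {c : ℝ} (hc : c ≠ 0) (x : ℝ) : x * log (c / x) = x * log c - x * log x := by
  rcases eq_or_ne x 0 with rfl | hx
  · simp
  · rw [log_div hc hx]; ring

noncomputable def logSpreadIncrement (n k : ℕ) : ℝ :=
  ((k + 1 : ℕ) : ℝ) * log (exp 1 * n / (k + 1 : ℕ)) - k * log (exp 1 * n / k)

theorem sum_range_logSpreadIncrement (n m : ℕ) :
    ∑ k ∈ range m, logSpreadIncrement n k = m * log (exp 1 * n / m) := by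
  unfold logSpreadIncrement
  simpa using sum_range_sub (fun j : ℕ ↦ (j : ℝ) * log (exp 1 * n / j)) m

section
variable {n : ℕ}

theorem logSpreadIncrement_eq (hn : 0 < n) (k : ℕ) :
    logSpreadIncrement n k = log (exp 1 * n) - ((k + 1) * log (k + 1) - k * log k) := by
  have : exp 1 * n ≠ 0 := by positivity
  rw [logSpreadIncrement, mul_log_div_eq this, mul_log_div_eq this]
  push_cast; ring

theorem logSpreadIncrement_succ_le (hn : 0 < n) (k : ℕ) :
    logSpreadIncrement n (k + 1) ≤ logSpreadIncrement n k := by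
  have := convexOn_mul_log.slope_mono_adjacent (x := k) (y := k + 1) (z := k + 1 + 1)
    (Set.mem_Ici.2 k.cast_nonneg) (Set.mem_Ici.2 (by positivity)) (lt_add_one _) (lt_add_one _)
  rw [logSpreadIncrement_eq hn, logSpreadIncrement_eq hn]
  simp only [add_sub_cancel_left, div_one] at this
  push_cast
  linarith

theorem logSpreadIncrement_le (hn : 0 < n) (k : ℕ) :
    logSpreadIncrement n k ≤ log (exp 1 * n) - log (k + 1) := by
  rw [logSpreadIncrement_eq hn]
  linarith [log_add_one_le_mul_log_add_one_sub_mul_log k.cast_nonneg]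

theorem logSpreadIncrement_nonneg {k : ℕ} (hk : k < n) : 0 ≤ logSpreadIncrement n k := by
  have hn : 0 < n := k.zero_le.trans_lt hk
  have hkn : log (k + 1) ≤ log n := log_le_log (by positivity) (by exact_mod_cast hk)
  rw [logSpreadIncrement_eq hn, log_mul (exp_pos 1).ne' (by positivity), log_exp]
  linarith [mul_log_add_one_sub_mul_log_le (k.cast_nonneg : (0 : ℝ) ≤ k)]

end

theorem sum_range_logSpreadIncrement_sq_le (n : ℕ) :
    ∑ k ∈ range n, logSpreadIncrement n k ^ 2 ≤ 5 * n := by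
  rcases n.eq_zero_or_pos with rfl | hn
  · simp
  have hn' : (1 : ℝ) ≤ n := by exact_mod_cast hn
  have hL : log (exp 1 * n) = log n + 1 := by
    rw [log_mul (exp_pos 1).ne' (by positivity), log_exp, add_comm]
  set L := log (exp 1 * n)
  calc ∑ k ∈ range n, logSpreadIncrement n k ^ 2
      ≤ ∑ k ∈ range n, (L - log (k + 1)) ^ 2 := sum_le_sum fun k hk ↦
        pow_le_pow_left₀ (logSpreadIncrement_nonneg (mem_range.1 hk))
          (logSpreadIncrement_le hn k) 2
    _ ≤ L ^ 2 + ∫ x in (1 : ℝ)..n, (L - log x) ^ 2 :=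
        sum_range_sq_sub_log_succ_le hn (by linarith)
    _ ≤ 5 * n := by
        rw [integral_sq_sub_log hn', hL]
        nlinarith [log_nonneg hn']

noncomputable def logSpreadMajorant (n : ℕ) (t : ℝ) (k : ℕ) : ℝ :=
  (if k = 0 then t else 0) + logSpreadIncrement n k

section
variable {n : ℕ} {t : ℝ}

theorem sum_range_logSpreadMajorant {m : ℕ} (hm : 0 < m) :
    ∑ k ∈ range m, logSpreadMajorant n t k = t + m * log (exp 1 * n / m) := by
  simp [logSpreadMajorant, sum_add_distrib, sum_range_logSpreadIncrement, hm]

theorem logSpreadMajorant_antitone (hn : 0 < n) (ht : 0 ≤ t) :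
    Antitone (logSpreadMajorant n t) := by
  refine antitone_nat_of_succ_le fun k ↦ ?_
  have := logSpreadIncrement_succ_le hn k
  simp only [logSpreadMajorant, Nat.add_one_ne_zero, if_false, zero_add]
  split_ifs <;> linarith

theorem logSpreadMajorant_nonneg (ht : 0 ≤ t) {k : ℕ} (hk : k < n) :
    0 ≤ logSpreadMajorant n t k := by
  have := logSpreadIncrement_nonneg hk
  unfold logSpreadMajorant
  split_ifs <;> positivity

theorem sum_range_logSpreadMajorant_mul_le (hn : 0 < n) (t₁ t₂ : ℝ) :
    ∑ k ∈ range n, logSpreadMajorant n t₁ k * logSpreadMajorant n t₂ k ≤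
      t₁ * t₂ + (t₁ + t₂) * log (exp 1 * n) + 5 * n := by
  obtain ⟨n, rfl⟩ : ∃ m, n = m + 1 := ⟨n - 1, by omega⟩
  have hψ₀ : logSpreadIncrement (n + 1) 0 = log (exp 1 * (n + 1 : ℕ)) := by
    simp [logSpreadIncrement]
  have hsq := sum_range_logSpreadIncrement_sq_le (n + 1)
  rw [sum_range_succ', hψ₀] at hsq
  simp only [sum_range_succ', logSpreadMajorant, hψ₀, if_true, Nat.add_one_ne_zero, if_false,
    zero_add, ← sq]
  linarith
end

theorem sum_range_decreasingRearrangement_le_sum_range_logSpreadMajorant {n : ℕ}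
    {a : Fin n → ℝ} {t : ℝ}
    (h : ∀ S : Finset (Fin n), S.Nonempty →
      ∑ i ∈ S, a i ≤ t + (S.card : ℝ) * log (exp 1 * n / S.card))
    {m : ℕ} (hm : m ≤ n) :
    ∑ k ∈ range m, decreasingRearrangement a k ≤ ∑ k ∈ range m, logSpreadMajorant n t k := by
  rcases m.eq_zero_or_pos with rfl | hm₀
  · simp
  obtain ⟨S, rfl, hS⟩ := exists_card_eq_sum_eq_sum_range_decreasingRearrangement a hm
  rw [← hS, sum_range_logSpreadMajorant hm₀]
  exact h S (card_pos.1 hm₀)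

theorem inner_product_of_log_spread_vectors {n : ℕ} (v w : Fin n → ℝ)
    (t₁ t₂ : ℝ) (ht₁ : 0 ≤ t₁) (ht₂ : 0 ≤ t₂)
    (hv : ∀ S : Finset (Fin n), S.Nonempty →
      ∑ i ∈ S, |v i| ≤ t₁ + (S.card : ℝ) * Real.log (Real.exp 1 * n / S.card))
    (hw : ∀ S : Finset (Fin n), S.Nonempty →
      ∑ i ∈ S, |w i| ≤ t₂ + (S.card : ℝ) * Real.log (Real.exp 1 * n / S.card)) :
    |∑ i, v i * w i| ≤ t₁ * t₂ + (t₁ + t₂) * Real.log (Real.exp 1 * n) + 6 * n := by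
  rcases n.eq_zero_or_pos with rfl | hn
  · simpa using mul_nonneg ht₁ ht₂
  set A := decreasingRearrangement fun i ↦ |v i|
  set B := decreasingRearrangement fun i ↦ |w i|
  calc |∑ i, v i * w i| ≤ ∑ i, |v i| * |w i| := by
        simpa only [abs_mul] using abs_sum_le_sum_abs (fun i ↦ v i * w i) univ
    _ ≤ ∑ k ∈ range n, A k * B k := sum_mul_le_sum_range_decreasingRearrangement_mul _ _
    _ ≤ ∑ k ∈ range n, logSpreadMajorant n t₁ k * B k :=
        sum_range_mul_le_sum_range_mul_of_sum_range_le (decreasingRearrangement_antitoneOn _)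
          (fun k _ ↦ decreasingRearrangement_nonneg _ (fun i ↦ abs_nonneg _) k)
          (fun m hm ↦ sum_range_decreasingRearrangement_le_sum_range_logSpreadMajorant hv hm)
    _ = ∑ k ∈ range n, B k * logSpreadMajorant n t₁ k := by simp only [mul_comm]
    _ ≤ ∑ k ∈ range n, logSpreadMajorant n t₂ k * logSpreadMajorant n t₁ k :=
        sum_range_mul_le_sum_range_mul_of_sum_range_le
          ((logSpreadMajorant_antitone hn ht₁).antitoneOn _)
          (fun k hk ↦ logSpreadMajorant_nonneg ht₁ hk)
          (fun m hm ↦ sum_range_decreasingRearrangement_le_sum_range_logSpreadMajorant hw hm)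
    _ ≤ t₁ * t₂ + (t₁ + t₂) * log (exp 1 * n) + 5 * n := by
        simpa only [mul_comm] using sum_range_logSpreadMajorant_mul_le hn t₁ t₂
    _ ≤ t₁ * t₂ + (t₁ + t₂) * log (exp 1 * n) + 6 * n := by
        linarith [(n.cast_nonneg : (0 : ℝ) ≤ n)]
end

section
/- Let S ⊆ [n] have size γn and let z₁, …, zₙ be mutually independent real random variables such that (1) for all i, P(zᵢ ≥ 0) = P(zᵢ ≤ 0), and (2) for some ε ≥ 0 and q > 0, for all i ∈ S, P(zᵢ ∈ [0, ε]) = P(zᵢ ∈ [−ε, 0]) ≥ q. Then with probability at least 1 − 2·exp(−Ω(q²γ²n)), the median ẑ of z₁, …, zₙ satisfies |ẑ| ≤ ε. -/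
/-!
A median exceeds `ε` only if at least half of the `zᵢ` exceed `ε`. Since `{zᵢ ≥ 0}` and `{zᵢ ≤ 0}`
have equal mass and overlap only inside `{zᵢ ∈ [0, ε]}`, `P(zᵢ > ε) ≤ (1 - P(zᵢ ∈ [0, ε])) / 2`,
which is at most `1/2`, and at most `(1 - q)/2` for `i ∈ S`. So the expected number of `i` with
`zᵢ > ε` is at most `n/2 - q|S|/2`, and Hoeffding's inequality bounds the probability that it
reaches `n/2` by `exp (-q²|S|²/(2n)) = exp (-q²γ²n/2)`. The lower tail is the same bound for `-z`.
-/

open MeasureTheory ProbabilityTheory Finset Real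

attribute [local instance] Classical.propDecidable

section

variable {Ω : Type*} [MeasurableSpace Ω] {μ : Measure Ω} [IsProbabilityMeasure μ]

lemma measureReal_lt_le_of_symm {z : Ω → ℝ} (hz : Measurable z) {ε : ℝ} (hε : 0 ≤ ε)
    (hsym : μ {ω | 0 ≤ z ω} = μ {ω | z ω ≤ 0}) :
    μ.real {ω | ε < z ω} ≤ (1 - μ.real {ω | z ω ∈ Set.Icc 0 ε}) / 2 := by
  have hsplit : μ.real {ω | 0 ≤ z ω} = μ.real {ω | z ω ∈ Set.Icc 0 ε} + μ.real {ω | ε < z ω} := by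
    rw [← measureReal_union _ (measurableSet_lt measurable_const hz)]
    · congr 1
      ext ω
      simpa using (Set.ext_iff.1 (Set.Icc_union_Ioi_eq_Ici hε) (z ω)).symm
    · exact Set.disjoint_left.2 fun ω h h' => (not_lt.2 h.2) h'
  -- `{0 ≤ z}` and `{z ≤ 0}` cover `Ω` and overlap in `{z = 0} ⊆ {z ∈ [0, ε]}`
  have hcover := measureReal_union_add_inter (μ := μ) (s := {ω | 0 ≤ z ω})
    (t := {ω | z ω ≤ 0}) (measurableSet_le hz measurable_const)
  have hunion : {ω | 0 ≤ z ω} ∪ {ω | z ω ≤ 0} = Set.univ := by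
    ext ω; simpa using le_total 0 (z ω)
  have hzero : μ.real ({ω | 0 ≤ z ω} ∩ {ω | z ω ≤ 0}) ≤ μ.real {ω | z ω ∈ Set.Icc 0 ε} :=
    measureReal_mono fun ω ⟨h0, h0'⟩ => ⟨h0, h0'.trans hε⟩
  have hsym' : μ.real {ω | 0 ≤ z ω} = μ.real {ω | z ω ≤ 0} := 
    congrArg ENNReal.toReal hsym
  rw [hunion, probReal_univ] at hcover
  linarith

lemma measureReal_sum_ge_le_of_iIndepFun_mem_Icc {ι : Type*} [Fintype ι] {X : ι → Ω → ℝ}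
    (hind : iIndepFun X μ) (hX : ∀ i, AEMeasurable (X i) μ)
    (h01 : ∀ i, ∀ᵐ ω ∂μ, X i ω ∈ Set.Icc 0 1) {t : ℝ} (ht : 0 ≤ t) :
    μ.real {ω | ∑ i, μ[X i] + t ≤ ∑ i, X i ω} ≤ exp (-2 * t ^ 2 / Fintype.card ι) := by
  have hcentered : iIndepFun (fun i => (fun x => x - μ[X i]) ∘ X i) μ :=
    hind.comp (fun i x => x - μ[X i]) fun _ => measurable_id.sub_const _
  have hoeffding := HasSubgaussianMGF.measure_sum_ge_le_of_iIndepFun hcentered (s := univ)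
    (fun i _ => hasSubgaussianMGF_of_mem_Icc (hX i) (h01 i)) ht
  convert hoeffding using 2
  · ext ω
    simp only [Set.mem_ofPred_eq, Function.comp_apply, sum_sub_distrib, le_sub_iff_add_le']
  · simp only [sum_const, card_univ, nsmul_eq_mul, sub_zero, nnnorm_one]
    push_cast
    ring

lemma measureReal_card_le_two_mul_card_mem_le {ι : Type*} [Fintype ι] {z : ι → Ω → ℝ}
    (hz : ∀ i, Measurable (z i)) (hind : iIndepFun z μ) {B : Set ℝ} (hB : MeasurableSet B)
    {t : ℝ} (ht : 0 ≤ t) (hmean : ∑ i, μ.real (z i ⁻¹' B) + t ≤ Fintype.card ι / 2) :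
    μ.real {ω | Fintype.card ι ≤ 2 * #{i | z i ω ∈ B}} ≤
      exp (-2 * t ^ 2 / Fintype.card ι) := by
  set X : ι → Ω → ℝ := fun i => B.indicator 1 ∘ z i
  have hX : ∀ i, Measurable (X i) := fun i => (measurable_const.indicator hB).comp (hz i)
  have hmeanX : ∀ i, μ[X i] = μ.real (z i ⁻¹' B) := fun i => by
    rw [← integral_indicator_one (hB.preimage (hz i))]
    rfl
  have hcount : ∀ ω, ∑ i, X i ω = #{i | z i ω ∈ B} := fun ω => by
    simp [X, Set.indicator_apply, sum_boole]
  have hindX : iIndepFun X μ := hind.comp _ fun _ => measurable_const.indicator hB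
  have h01 : ∀ i ω, X i ω ∈ Set.Icc 0 1 := fun i ω => by
    by_cases h : z i ω ∈ B <;> simp [X, h]
  refine (measureReal_mono fun ω hω => ?_).trans <| measureReal_sum_ge_le_of_iIndepFun_mem_Icc
    hindX (fun i => (hX i).aemeasurable) (fun i => ae_of_all _ (h01 i)) ht
  have hω' : (Fintype.card ι : ℝ) ≤ 2 * #{i | z i ω ∈ B} := by exact_mod_cast hω
  simp only [Set.mem_ofPred_eq, hmeanX, hcount]
  linarith

variable {ι : Type*} [Fintype ι] {z : ι → Ω → ℝ} {S : Finset ι} {q ε : ℝ}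

lemma measureReal_card_le_two_mul_card_lt_le (hz : ∀ i, Measurable (z i))
    (hind : iIndepFun z μ) (hε : 0 ≤ ε) (hq : 0 ≤ q)
    (hsym : ∀ i, μ {ω | 0 ≤ z i ω} = μ {ω | z i ω ≤ 0})
    (hS : ∀ i ∈ S, ENNReal.ofReal q ≤ μ {ω | z i ω ∈ Set.Icc 0 ε}) :
    μ.real {ω | Fintype.card ι ≤ 2 * #{i | ε < z i ω}} ≤
      exp (-(q ^ 2 * #S ^ 2 / (2 * Fintype.card ι))) := by
  have htail : ∀ i, μ.real (z i ⁻¹' Set.Ioi ε) ≤ (1 - if i ∈ S then q else 0) / 2 := fun i => by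
    refine (measureReal_lt_le_of_symm (hz i) hε (hsym i)).trans ?_
    gcongr
    split_ifs with hi
    · exact (ENNReal.ofReal_le_iff_le_toReal (measure_ne_top _ _)).1 (hS i hi)
    · exact measureReal_nonneg
  have hmean : ∑ i, μ.real (z i ⁻¹' Set.Ioi ε) + q * #S / 2 ≤ Fintype.card ι / 2 := by
    have := sum_le_sum fun i (_ : i ∈ univ) => htail i
    rw [← sum_div, sum_sub_distrib, sum_ite_mem, univ_inter, sum_const, sum_const] at this
    simp only [card_univ, nsmul_eq_mul, mul_one] at this
    linarith
  refine (measureReal_card_le_two_mul_card_mem_le hz hind measurableSet_Ioi (by positivity)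
    hmean).trans_eq ?_
  ring_nf

lemma measureReal_card_le_two_mul_card_lt_neg_le (hz : ∀ i, Measurable (z i))
    (hind : iIndepFun z μ) (hε : 0 ≤ ε) (hq : 0 ≤ q)
    (hsym : ∀ i, μ {ω | 0 ≤ z i ω} = μ {ω | z i ω ≤ 0})
    (hS : ∀ i ∈ S, ENNReal.ofReal q ≤ μ {ω | z i ω ∈ Set.Icc (-ε) 0}) :
    μ.real {ω | Fintype.card ι ≤ 2 * #{i | z i ω < -ε}} ≤
      exp (-(q ^ 2 * #S ^ 2 / (2 * Fintype.card ι))) := by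
  have hIcc : ∀ i, {ω | -z i ω ∈ Set.Icc 0 ε} = {ω | z i ω ∈ Set.Icc (-ε) 0} := fun i => by
    ext ω; simp only [Set.mem_ofPred_eq, Set.mem_Icc, neg_nonneg, neg_le]; exact and_comm
  have h := measureReal_card_le_two_mul_card_lt_le (z := fun i ω => -z i ω) (S := S)
    (fun i => (hz i).neg) (hind.comp (fun _ => Neg.neg) fun _ => measurable_neg) hε hq
    (fun i => by simpa only [neg_nonneg, neg_nonpos] using (hsym i).symm)
    (fun i hi => (hIcc i).symm ▸ hS i hi)
  simpa only [lt_neg] using h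

end

lemma abs_le_of_two_mul_card_lt {ι : Type*} [Fintype ι] {x : ι → ℝ} {ε m : ℝ}
    (hpos : ¬ Fintype.card ι ≤ 2 * #{i | ε < x i})
    (hneg : ¬ Fintype.card ι ≤ 2 * #{i | x i < -ε})
    (hle : Fintype.card ι ≤ 2 * #{i | x i ≤ m}) (hge : Fintype.card ι ≤ 2 * #{i | m ≤ x i}) :
    |m| ≤ ε := by
  refine abs_le.2 ⟨le_of_not_gt fun hm => hneg ?_, le_of_not_gt fun hm => hpos ?_⟩
  · exact hle.trans (Nat.mul_le_mul_left 2 (card_le_card (monotone_filter_right _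
      fun i _ (h : x i ≤ m) => h.trans_lt hm)))
  · exact hge.trans (Nat.mul_le_mul_left 2 (card_le_card (monotone_filter_right _
      fun i _ (h : m ≤ x i) => hm.trans_le h)))

theorem median_concentration :
    ∃ c : ℝ, 0 < c ∧
    ∀ (n : ℕ) (Ω : Type) (_ : MeasurableSpace Ω) (μ : Measure Ω),
      IsProbabilityMeasure μ →
    ∀ (z : Fin n → Ω → ℝ), (∀ i, Measurable (z i)) →
      iIndepFun z μ →
    ∀ (S : Finset (Fin n)) (γ q ε : ℝ),
      (S.card : ℝ) = γ * n → 0 < q → 0 ≤ ε →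
      (∀ i, μ {ω | 0 ≤ z i ω} = μ {ω | z i ω ≤ 0}) →
      (∀ i ∈ S, μ {ω | z i ω ∈ Set.Icc 0 ε} = μ {ω | z i ω ∈ Set.Icc (-ε) 0}
        ∧ ENNReal.ofReal q ≤ μ {ω | z i ω ∈ Set.Icc 0 ε}) →
      ENNReal.ofReal (1 - 2 * Real.exp (-(c * q ^ 2 * γ ^ 2 * n))) ≤
        μ {ω | ∀ med : ℝ,
          (n ≤ 2 * (Finset.univ.filter fun i => z i ω ≤ med).card ∧
           n ≤ 2 * (Finset.univ.filter fun i => med ≤ z i ω).card) → |med| ≤ ε} := by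
  refine ⟨1 / 2, one_half_pos, fun n Ω _ μ _ z hz hind S γ q ε hS hq hε hsym hSq => ?_⟩
  have hexponent : q ^ 2 * #S ^ 2 / (2 * Fintype.card (Fin n)) = 1 / 2 * q ^ 2 * γ ^ 2 * n := by
    rcases n.eq_zero_or_pos with rfl | hn
    · simp
    · rw [Fintype.card_fin, hS]; field_simp
  have hup := measureReal_card_le_two_mul_card_lt_le hz hind hε hq.le hsym fun i hi => (hSq i hi).2
  have hdown := measureReal_card_le_two_mul_card_lt_neg_le hz hind hε hq.le hsym
    fun i hi => (hSq i hi).1 ▸ (hSq i hi).2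
  rw [hexponent] at hup hdown
  set bad := {ω | Fintype.card (Fin n) ≤ 2 * #{i | ε < z i ω}} ∪
    {ω | Fintype.card (Fin n) ≤ 2 * #{i | z i ω < -ε}}
  have hgood : 1 ≤ μ.real bad + μ.real badᶜ := by
    simpa [measureReal_def, ENNReal.toReal_add] using
      ENNReal.toReal_mono (by finiteness) (measure_univ_le_add_compl (μ := μ) bad)
  rw [ENNReal.ofReal_le_iff_le_toReal (measure_ne_top _ _)]
  calc 1 - 2 * exp (-(1 / 2 * q ^ 2 * γ ^ 2 * n)) ≤ μ.real badᶜ := by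
        linarith [measureReal_union_le (μ := μ) {ω | Fintype.card (Fin n) ≤ 2 * #{i | ε < z i ω}}
          {ω | Fintype.card (Fin n) ≤ 2 * #{i | z i ω < -ε}}]
    _ ≤ _ := by
        refine measureReal_mono fun ω hω med ⟨hle, hge⟩ => ?_
        simp only [bad, Set.mem_compl_iff, Set.mem_union, Set.mem_ofPred_eq, not_or] at hω
        exact abs_le_of_two_mul_card_lt hω.1 hω.2 (by simpa using hle) (by simpa using hge)
end

section
/- Let 0 < m < n be integers. If B ~ Binomial(n, m/n), then P(B = m) ≥ 1/(2√n). -/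
/-! With `n = m + b` and Stirling's sequence `s k = k! / (√(2k) (k/e)^k)`, the point mass equals
`s n / (s m * s b) * √(2n) / (√(2m) √(2b))`: the powers of `k/e` cancel exactly. Since `s`
decreases from `s 1 = e/√2` to its limit `√π`, the first factor is at least `2√π / e²`, and
`√(2m) √(2b) ≤ m + b` by AM-GM, so the point mass is at least `2√(2π) / (e² √n) ≥ 1 / (2√n)`. -/

open Real

namespace Stirling

theorem stirlingSeq_pos {k : ℕ} (hk : k ≠ 0) : 0 < stirlingSeq k :=
  (sqrt_pos.2 pi_pos).trans_le (sqrt_pi_le_stirlingSeq hk)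

theorem stirlingSeq_le_exp_one_div_sqrt_two {k : ℕ} (hk : k ≠ 0) :
    stirlingSeq k ≤ exp 1 / √2 := by
  obtain ⟨j, rfl⟩ := Nat.exists_eq_succ_of_ne_zero hk
  simpa using stirlingSeq'_antitone (Nat.zero_le j)

theorem choose_mul_pow_mul_pow_eq {m b : ℕ} (hm : m ≠ 0) (hb : b ≠ 0) :
    (m + b).choose m * ((m : ℝ) / (m + b)) ^ m * ((b : ℝ) / (m + b)) ^ b =
      stirlingSeq (m + b) / (stirlingSeq m * stirlingSeq b) *
        (√(2 * (m + b)) / (√(2 * m) * √(2 * b))) := by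
  simp only [stirlingSeq, Nat.cast_choose ℝ (Nat.le_add_right m b), Nat.add_sub_cancel_left]
  push_cast
  field_simp
  rw [div_pow, div_pow, div_pow, div_pow, div_pow, pow_add, pow_add]
  field_simp

end Stirling

theorem sqrt_two_div_sqrt_add_le {x y : ℝ} (hx : 0 < x) (hy : 0 < y) :
    √2 / √(x + y) ≤ √(2 * (x + y)) / (√(2 * x) * √(2 * y)) := by
  have hxy : 0 < x + y := add_pos hx hy
  have amgm : √(2 * x) * √(2 * y) ≤ x + y := by
    rw [← sqrt_mul (by positivity), ← sqrt_sq hxy.le]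
    exact sqrt_le_sqrt (by nlinarith [sq_nonneg (x - y)])
  calc √2 / √(x + y) = √(2 * (x + y)) / (x + y) := by
        rw [sqrt_mul zero_le_two, eq_div_iff hxy.ne']
        field_simp
        rw [sq_sqrt hxy.le]
    _ ≤ √(2 * (x + y)) / (√(2 * x) * √(2 * y)) := by gcongr

theorem exp_one_sq_le_four_mul_sqrt_two_mul_sqrt_pi : exp 1 ^ 2 ≤ 4 * (√2 * √π) := by
  have h2 : (1.4 : ℝ) ≤ √2 := le_sqrt_of_sq_le (by norm_num)
  have hpi : (1.7 : ℝ) ≤ √π := le_sqrt_of_sq_le (by nlinarith [pi_gt_three])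
  have he : exp 1 < 2.7182818286 := exp_one_lt_d9
  nlinarith [exp_pos 1, mul_le_mul h2 hpi (by norm_num) (sqrt_nonneg 2)]

open Stirling in
theorem one_div_two_mul_sqrt_le_choose_mul_pow_mul_pow {m b : ℕ} (hm : m ≠ 0) (hb : b ≠ 0) :
    1 / (2 * √(m + b)) ≤
      (m + b).choose m * ((m : ℝ) / (m + b)) ^ m * ((b : ℝ) / (m + b)) ^ b := by
  have hn : (0 : ℝ) < m + b := by positivity
  have hsn := stirlingSeq_pos (k := m + b) (by omega)
  have hsm := stirlingSeq_pos hm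
  have hsb := stirlingSeq_pos hb
  rw [choose_mul_pow_mul_pow_eq hm hb]
  calc 1 / (2 * √(m + b)) ≤ √π / (exp 1 / √2 * (exp 1 / √2)) * (√2 / √(m + b)) := by
        have hs : 0 < √(m + b) := sqrt_pos.2 hn
        have h2 : √2 * √2 = 2 := mul_self_sqrt zero_le_two
        field_simp
        nlinarith [exp_one_sq_le_four_mul_sqrt_two_mul_sqrt_pi]
    _ ≤ _ := by
        refine mul_le_mul ?_ (sqrt_two_div_sqrt_add_le (by positivity) (by positivity))
          (by positivity) (by positivity)
        gcongr
        · exact sqrt_pi_le_stirlingSeq (by omega)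
        · exact stirlingSeq_le_exp_one_div_sqrt_two hm
        · exact stirlingSeq_le_exp_one_div_sqrt_two hb

theorem PMF.binomial_toNNReal_apply {p : ℝ} (hp : 0 ≤ p) (h : p.toNNReal ≤ 1) (n : ℕ)
    (i : Fin (n + 1)) :
    PMF.binomial p.toNNReal h n i =
      ENNReal.ofReal (p ^ (i : ℕ) * (1 - p) ^ (n - i) * n.choose i) := by
  have hq : 0 ≤ 1 - p := sub_nonneg.2 (Real.toNNReal_le_one.1 h)
  rw [PMF.binomial_apply, Fin.val_last, ENNReal.ofReal_mul (by positivity),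
    ENNReal.ofReal_mul (by positivity), ENNReal.ofReal_pow hp, ENNReal.ofReal_pow hq,
    ENNReal.ofReal_sub _ hp, ENNReal.ofReal_one, ENNReal.ofReal_natCast, ENNReal.ofReal]

theorem binomial_point_mass_lower_bound (n m : ℕ) (h0 : 0 < m) (hmn : m < n)
    (hp : ENNReal.ofReal ((m : ℝ) / n) ≤ 1) :
    ENNReal.ofReal (1 / (2 * Real.sqrt n)) ≤
      PMF.binomial (Real.toNNReal ((m : ℝ) / n)) (ENNReal.coe_le_one_iff.mp hp) n
        ⟨m, by omega⟩ := by
  obtain ⟨b, rfl⟩ : ∃ b, n = m + b := ⟨n - m, by omega⟩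
  rw [PMF.binomial_toNNReal_apply (by positivity)]
  apply ENNReal.ofReal_le_ofReal
  have hq : 1 - (m : ℝ) / (m + b) = b / (m + b) := by field_simp; ring
  convert one_div_two_mul_sqrt_le_choose_mul_pow_mul_pow h0.ne' (by omega : b ≠ 0) using 1
  · push_cast; rfl
  · push_cast
    rw [hq, Nat.add_sub_cancel_left]
    ring
end

section
/- Let z be a real random variable with P(z ≤ 0) = P(z ≥ 0), and let φ_h(t) = sign(t)·min(|t|/h, 1) for h > 0. Then for any τ with |τ| ≥ 2h: τ·E[φ_h(τ − z)] ≥ |τ|·P(0 ≤ sign(τ)·z ≤ |τ|/2). -/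
/-!
For `a ≥ 2h` the clamp `φ_h` equals `1` on `{z ≤ a/2}` and is `≥ -1` everywhere, so
`E φ_h(a - z) ≥ P(z ≤ a/2) - P(z > a/2)`. Since `P(z ≥ 0) ≤ P(z ≤ 0) ≤ P(z ≤ a/2)`, this is at
least `P(0 ≤ z ≤ a/2)`. Oddness of `φ_h` reduces a general `τ` to `a = |τ|`, with `z` replaced
by `sign τ * z`, which still has median `0`.
-/

open MeasureTheory

/-- The derivative of the Huber penalty with parameter `h`. -/
noncomputable def phiHuber (h t : ℝ) : ℝ := Real.sign t * min (|t| / h) 1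

lemma phiHuber_eq_max_min {h : ℝ} (hh : 0 < h) (t : ℝ) :
    phiHuber h t = max (-1) (min (t / h) 1) := by
  unfold phiHuber
  rcases lt_trichotomy t 0 with ht | rfl | ht
  · have hneg : t / h < 0 := div_neg_of_neg_of_pos ht hh
    rw [Real.sign_of_neg ht, abs_of_neg ht, neg_div, min_eq_left (by linarith : t / h ≤ 1),
      neg_one_mul, ← max_neg_neg, neg_neg, max_comm]
  · simp
  · have hpos : 0 < t / h := div_pos ht hh
    rw [Real.sign_of_pos ht, abs_of_pos ht, one_mul, max_eq_right]
    exact le_min (by linarith) (by norm_num)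

lemma continuous_phiHuber {h : ℝ} (hh : 0 < h) : Continuous (phiHuber h) := by
  rw [funext (phiHuber_eq_max_min hh)]
  fun_prop

lemma neg_one_le_phiHuber {h : ℝ} (hh : 0 < h) (t : ℝ) : -1 ≤ phiHuber h t :=
  (phiHuber_eq_max_min hh t).symm ▸ le_max_left _ _

lemma phiHuber_le_one {h : ℝ} (hh : 0 < h) (t : ℝ) : phiHuber h t ≤ 1 := by
  rw [phiHuber_eq_max_min hh]
  exact max_le (by norm_num) (min_le_right _ _)

lemma phiHuber_of_le {h t : ℝ} (hh : 0 < h) (ht : h ≤ t) : phiHuber h t = 1 := by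
  rw [phiHuber_eq_max_min hh, min_eq_right ((one_le_div hh).mpr ht)]
  norm_num

lemma phiHuber_neg (h t : ℝ) : phiHuber h (-t) = -phiHuber h t := by
  simp only [phiHuber, Real.sign_neg, abs_neg, neg_mul]

lemma mul_phiHuber_sub (h τ x : ℝ) :
    τ * phiHuber h (τ - x) = |τ| * phiHuber h (|τ| - Real.sign τ * x) := by
  rcases lt_trichotomy τ 0 with hτ | rfl | hτ
  · rw [abs_of_neg hτ, Real.sign_of_neg hτ, show -τ - -1 * x = -(τ - x) by ring, phiHuber_neg]
    ring
  · simp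
  · rw [abs_of_pos hτ, Real.sign_of_pos hτ, one_mul]

section

variable {Ω : Type*} [MeasurableSpace Ω] {μ : Measure Ω} {z : Ω → ℝ}

lemma measure_mul_nonpos_eq_measure_nonneg_mul
    (hsym : μ {ω | z ω ≤ 0} = μ {ω | 0 ≤ z ω}) (c : ℝ) :
    μ {ω | c * z ω ≤ 0} = μ {ω | 0 ≤ c * z ω} := by
  rcases lt_trichotomy c 0 with hc | rfl | hc
  · simp [mul_nonpos_iff, mul_nonneg_iff, hc.le, not_le.mpr hc, hsym]
  · simp
  · simp [mul_nonpos_iff, mul_nonneg_iff, hc.le, not_le.mpr hc, hsym]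

variable [IsProbabilityMeasure μ]

lemma measureReal_nonneg_le_le_two_mul_sub_one (hz : Measurable z)
    (hmed : μ {ω | 0 ≤ z ω} ≤ μ {ω | z ω ≤ 0}) {c : ℝ} (hc : 0 ≤ c) :
    μ.real {ω | 0 ≤ z ω ∧ z ω ≤ c} ≤ 2 * μ.real {ω | z ω ≤ c} - 1 := by
  have hsplit :
      μ.real {ω | 0 ≤ z ω} = μ.real {ω | 0 ≤ z ω ∧ z ω ≤ c} + μ.real {ω | c < z ω} := by
    have hunion : {ω | 0 ≤ z ω} = {ω | 0 ≤ z ω ∧ z ω ≤ c} ∪ {ω | c < z ω} := by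
      ext ω
      exact ⟨fun h0 => (le_or_gt (z ω) c).imp (⟨h0, ·⟩) id,
        by rintro (⟨h0, -⟩ | hlt); exacts [h0, hc.trans hlt.le]⟩
    rw [hunion, measureReal_union _ (measurableSet_lt measurable_const hz)]
    exact Set.disjoint_left.2 fun ω (hB : 0 ≤ z ω ∧ z ω ≤ c) (hlt : c < z ω) =>
      not_lt.2 hB.2 hlt
  have htotal : μ.real {ω | z ω ≤ c} + μ.real {ω | c < z ω} = 1 := by
    simpa [Set.compl_ofPred] using
      measureReal_add_measureReal_compl (μ := μ) (measurableSet_le hz (measurable_const (a := c)))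
  have hmono : μ.real {ω | 0 ≤ z ω} ≤ μ.real {ω | z ω ≤ c} :=
    calc μ.real {ω | 0 ≤ z ω} ≤ μ.real {ω | z ω ≤ 0} := ENNReal.toReal_mono (by finiteness) hmed
      _ ≤ μ.real {ω | z ω ≤ c} := measureReal_mono fun ω (hω : z ω ≤ 0) => hω.trans hc
  linarith

lemma two_mul_measureReal_sub_one_le_integral_phiHuber (hz : Measurable z) {h a c : ℝ}
    (hh : 0 < h) (hc : c + h ≤ a) :
    2 * μ.real {ω | z ω ≤ c} - 1 ≤ ∫ ω, phiHuber h (a - z ω) ∂μ := by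
  set A := {ω | z ω ≤ c}
  have hA : MeasurableSet A := measurableSet_le hz measurable_const
  have hstep : Integrable (fun ω => A.indicator (fun _ => (2 : ℝ)) ω - 1) μ :=
    ((integrable_const 2).indicator hA).sub (integrable_const 1)
  have hphi : Integrable (fun ω => phiHuber h (a - z ω)) μ :=
    Integrable.of_bound ((continuous_phiHuber hh).measurable.comp
      (measurable_const.sub hz)).aestronglyMeasurable 1
      (ae_of_all _ fun ω => abs_le.mpr ⟨neg_one_le_phiHuber hh _, phiHuber_le_one hh _⟩)
  have hbound : ∀ ω, A.indicator (fun _ => (2 : ℝ)) ω - 1 ≤ phiHuber h (a - z ω) := by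
    intro ω
    by_cases hω : ω ∈ A
    · rw [Set.indicator_of_mem hω, phiHuber_of_le hh (by linarith [show z ω ≤ c from hω])]
      norm_num
    · rw [Set.indicator_of_notMem hω]
      linarith [neg_one_le_phiHuber hh (a - z ω)]
  calc 2 * μ.real A - 1 = ∫ ω, (A.indicator (fun _ => (2 : ℝ)) ω - 1) ∂μ := by
        rw [integral_sub ((integrable_const 2).indicator hA) (integrable_const 1),
          integral_indicator_const _ hA]
        simp [mul_comm]
    _ ≤ ∫ ω, phiHuber h (a - z ω) ∂μ := integral_mono hstep hphi hbound

lemma measureReal_nonneg_le_le_integral_phiHuber (hz : Measurable z)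
    (hmed : μ {ω | 0 ≤ z ω} ≤ μ {ω | z ω ≤ 0}) {h a : ℝ} (hh : 0 < h) (ha : 2 * h ≤ a) :
    μ.real {ω | 0 ≤ z ω ∧ z ω ≤ a / 2} ≤ ∫ ω, phiHuber h (a - z ω) ∂μ :=
  (measureReal_nonneg_le_le_two_mul_sub_one hz hmed (by linarith)).trans
    (two_mul_measureReal_sub_one_le_integral_phiHuber hz hh (by linarith))

end

theorem huber_derivative_expectation_bound
    (Ω : Type) [MeasurableSpace Ω] (μ : Measure Ω) [IsProbabilityMeasure μ]
    (z : Ω → ℝ) (hz : Measurable z)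
    (hsym : μ {ω | z ω ≤ 0} = μ {ω | 0 ≤ z ω})
    (h τ : ℝ) (hh : 0 < h) (hτ : 2 * h ≤ |τ|) :
    |τ| * (μ {ω | 0 ≤ Real.sign τ * z ω ∧ Real.sign τ * z ω ≤ |τ| / 2}).toReal
      ≤ τ * ∫ ω, phiHuber h (τ - z ω) ∂μ := by
  have key := measureReal_nonneg_le_le_integral_phiHuber (measurable_const.mul hz)
    (measure_mul_nonpos_eq_measure_nonneg_mul hsym (Real.sign τ)).ge hh hτ
  calc |τ| * (μ {ω | 0 ≤ Real.sign τ * z ω ∧ Real.sign τ * z ω ≤ |τ| / 2}).toReal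
      ≤ |τ| * ∫ ω, phiHuber h (|τ| - Real.sign τ * z ω) ∂μ :=
        mul_le_mul_of_nonneg_left key (abs_nonneg τ)
    _ = ∫ ω, τ * phiHuber h (τ - z ω) ∂μ := by
        rw [← integral_const_mul]
        congr 1 with ω
        exact (mul_phiHuber_sub h τ (z ω)).symm
    _ = τ * ∫ ω, phiHuber h (τ - z ω) ∂μ := integral_const_mul τ _
end

section
/- Let c : [n] → [n] be a uniformly random function (each c(i) independent uniform on [n]). Then with probability at least 1 − 1/n, for every subset M ⊆ [n], |c^{−1}(M)| ≤ 4·|M|·ln(en/|M|). -/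
open MeasureTheory ProbabilityTheory Real Finset
open scoped Nat ENNReal

attribute [local instance] Classical.propDecidable

/-! If a nonempty `M` with `|M| = m` has more than `4 m L` preimages, `L = log (e n / m)`, then
some set `S` of `k = ⌊4 m L⌋ + 1` points is mapped into `M`, which by independence has probability
at most `(m / n) ^ k` for each `S`. The union bound over the `C(n, m)` sets `M` of size `m` and the
`C(n, k)` sets `S`, with `C(n, j) ≤ (e n / j) ^ j`, bounds the contribution of size `m` by
`exp (m L + k log (e m / k)) ≤ n⁻²` when `4 m < n`; otherwise `k > n` and it vanishes. Summing over
the `n` sizes gives `1 / n`. -/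

lemma Nat.choose_le_exp_mul_div_pow (n k : ℕ) : (n.choose k : ℝ) ≤ (exp 1 * n / k) ^ k := by
  rcases k.eq_zero_or_pos with rfl | hk
  · simp
  calc (n.choose k : ℝ) ≤ n ^ k / k ! := Nat.choose_le_pow_div k n
    _ = (n / k) ^ k * (k ^ k / k !) := by rw [div_pow]; field_simp
    _ ≤ (n / k) ^ k * exp k := by gcongr; exact pow_div_factorial_le_exp _ (Nat.cast_nonneg k) k
    _ = (exp 1 * n / k) ^ k := by rw [← exp_one_pow]; ring

lemma log_exp_mul_div {x y : ℝ} (hx : 0 < x) (hy : 0 < y) :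
    log (exp 1 * x / y) = 1 + log x - log y := by
  rw [mul_div_assoc, log_mul (exp_ne_zero 1) (by positivity), log_exp, log_div hx.ne' hy.ne']
  ring

lemma one_le_log_exp_mul_div {x y : ℝ} (hy : 0 < y) (hyx : y ≤ x) :
    1 ≤ log (exp 1 * x / y) := by
  rw [log_exp_mul_div (hy.trans_le hyx) hy]
  linarith [log_le_log hy hyx]

lemma add_mul_log_exp_mul_div_le {m n k : ℝ} (hm : 1 ≤ m) (hmn : 4 * m < n)
    (hk : 4 * m * log (exp 1 * n / m) ≤ k) :
    m * log (exp 1 * n / m) + k * log (exp 1 * m / k) ≤ -2 * log n := by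
  have hm0 : 0 < m := by linarith
  have hn0 : 0 < n := by linarith
  set L := log (exp 1 * n / m) with hL
  rw [log_exp_mul_div hn0 hm0] at hL
  have hlog4 : 1 < log 4 := (lt_log_iff_exp_lt (by norm_num)).2 (by linarith [exp_one_lt_d9])
  have hlog4m : log 4 + log m < log n := by
    rw [← log_mul (by norm_num) hm0.ne']; exact log_lt_log (by positivity) hmn
  have hL2 : 2 < L := by linarith
  have hk0 : 0 < k := lt_of_lt_of_le (by positivity) hk
  -- `e ^ 2 < 8 < 4 L`, hence `e m / k ≤ e / (4 L) < 1 / e`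
  have hlog4L : 2 ≤ log (4 * L) := by
    refine (le_log_iff_exp_le (by positivity)).2 ?_
    have : exp 2 = exp 1 ^ 2 := by rw [← exp_nat_mul]; norm_num
    nlinarith [exp_one_lt_d9, exp_pos 1]
  have hJ : log (exp 1 * m / k) ≤ -1 := by
    rw [log_exp_mul_div hm0 hk0]
    have := log_le_log (by positivity) hk
    rw [mul_comm 4 m, mul_assoc, log_mul hm0.ne' (by positivity)] at this
    linarith
  have hmL : 1 + log n ≤ m * L := by
    nlinarith [log_le_sub_one_of_pos hm0, log_nonneg hm, log_le_log hm0 (by linarith : m ≤ n)]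
  nlinarith [log_nonneg (by linarith : 1 ≤ n)]

lemma choose_mul_choose_mul_div_pow_le {n m k : ℕ} (hm : 1 ≤ m) (hmn : 4 * m < n)
    (hk : 4 * m * log (exp 1 * n / m) ≤ k) :
    (n.choose m : ℝ) * (n.choose k * (m / n) ^ k) ≤ 1 / n ^ 2 := by
  have hm1 : (1 : ℝ) ≤ m := by exact_mod_cast hm
  have hmn' : 4 * (m : ℝ) < n := by exact_mod_cast hmn
  have hm0 : (0 : ℝ) < m := by positivity
  have hn0 : (0 : ℝ) < n := by linarith
  have hk0 : (0 : ℝ) < k := by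
    nlinarith [one_le_log_exp_mul_div hm0 (by linarith : (m : ℝ) ≤ n)]
  calc (n.choose m : ℝ) * (n.choose k * (m / n) ^ k)
      ≤ (exp 1 * n / m) ^ m * ((exp 1 * n / k) ^ k * (m / n) ^ k) := by
        gcongr <;> exact Nat.choose_le_exp_mul_div_pow _ _
    _ = exp (m * log (exp 1 * n / m) + k * log (exp 1 * m / k)) := by
        have hcancel : exp 1 * n / k * (m / n) = exp 1 * m / k := by field_simp
        rw [exp_add, ← mul_pow, hcancel, exp_nat_mul, exp_nat_mul, exp_log (by positivity),
          exp_log (by positivity)]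
    _ ≤ exp (-2 * log n) := exp_le_exp.2 (add_mul_log_exp_mul_div_le hm1 hmn' hk)
    _ = 1 / n ^ 2 := by
        rw [neg_mul, exp_neg, ← log_rpow hn0, exp_log (by positivity)]; norm_num

noncomputable def preimageCardThreshold (n m : ℕ) : ℕ :=
  ⌊4 * m * log (exp 1 * n / m)⌋₊ + 1

lemma lt_preimageCardThreshold (n m : ℕ) :
    4 * m * log (exp 1 * n / m) < preimageCardThreshold n m := by
  simpa [preimageCardThreshold] using Nat.lt_floor_add_one _

lemma preimageCardThreshold_le {n m k : ℕ} (hm : 1 ≤ m) (hmn : m ≤ n)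
    (hk : 4 * m * log (exp 1 * n / m) < k) : preimageCardThreshold n m ≤ k := by
  have hm0 : (0 : ℝ) < m := by exact_mod_cast hm
  have hL := one_le_log_exp_mul_div hm0 (by exact_mod_cast hmn : (m : ℝ) ≤ n)
  exact Nat.succ_le_of_lt ((Nat.floor_lt (by positivity)).2 hk)

lemma choose_mul_choose_preimageCardThreshold_le {n m : ℕ} (hm : 1 ≤ m) (hmn : m ≤ n) :
    (n.choose m : ℝ) *
        (n.choose (preimageCardThreshold n m) * (m / n) ^ preimageCardThreshold n m) ≤
      1 / n ^ 2 := by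
  have hk := lt_preimageCardThreshold n m
  rcases lt_or_ge (4 * m) n with hsmall | hlarge
  · exact choose_mul_choose_mul_div_pow_le hm hsmall hk.le
  · have hL := one_le_log_exp_mul_div (by exact_mod_cast hm : (0 : ℝ) < m)
      (by exact_mod_cast hmn : (m : ℝ) ≤ n)
    have : n < preimageCardThreshold n m := by
      have : (n : ℝ) ≤ 4 * m := by exact_mod_cast hlarge
      exact_mod_cast (show (n : ℝ) < preimageCardThreshold n m by nlinarith)
    rw [Nat.choose_eq_zero_of_lt this]
    simp

lemma sum_choose_preimageCardThreshold_le (n : ℕ) :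
    ∑ M : Finset (Fin n), (n.choose (preimageCardThreshold n #M) : ℝ) *
      (#M / n) ^ preimageCardThreshold n #M ≤ 1 / n := by
  set g : ℕ → ℝ := fun m =>
    n.choose (preimageCardThreshold n m) * (m / n) ^ preimageCardThreshold n m
  have hcard : ∑ M : Finset (Fin n), g #M = ∑ m ∈ range (n + 1), n.choose m * g m := by
    rw [← Finset.powerset_univ, Finset.sum_powerset_apply_card]
    simp [nsmul_eq_mul]
  have hzero : g 0 = 0 := by simp [g, preimageCardThreshold]
  calc ∑ M : Finset (Fin n), g #M = ∑ m ∈ range n, n.choose (m + 1) * g (m + 1) := by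
        rw [hcard, sum_range_succ', hzero]; simp
    _ ≤ ∑ m ∈ range n, 1 / (n : ℝ) ^ 2 := by
        gcongr with m hm
        exact choose_mul_choose_preimageCardThreshold_le (by omega) (by simp at hm; omega)
    _ = 1 / n := by
        rcases n.eq_zero_or_pos with rfl | hn
        · simp
        · rw [sum_const, card_range, nsmul_eq_mul, mul_one_div, pow_two,
            div_mul_cancel_right₀ (by positivity), one_div]

section Probability

variable {Ω : Type*} [MeasurableSpace Ω] {μ : Measure Ω}

lemma measure_preimage_finset_le {α : Type*} (f : Ω → α) (M : Finset α) {p : ℝ≥0∞}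
    (hf : ∀ j, μ {ω | f ω = j} ≤ p) : μ (f ⁻¹' M) ≤ #M * p := by
  have : f ⁻¹' M = ⋃ j ∈ M, {ω | f ω = j} := by ext; simp
  calc μ (f ⁻¹' M) ≤ ∑ j ∈ M, μ {ω | f ω = j} := this ▸ measure_biUnion_finset_le _ _
    _ ≤ #M * p := by simpa using sum_le_card_nsmul M _ p fun j _ => hf j

lemma ProbabilityTheory.iIndepFun.measure_le_card_filter_mem_le {ι α : Type*} [Fintype ι]
    [MeasurableSpace α] {c : ι → Ω → α} (hc : iIndepFun c μ) {M : Set α} (hM : MeasurableSet M)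
    {p : ℝ≥0∞} (hp : ∀ i, μ (c i ⁻¹' M) ≤ p) (k : ℕ) :
    μ {ω | k ≤ #{i | c i ω ∈ M}} ≤ (Fintype.card ι).choose k * p ^ k := by
  have hcover :
      {ω | k ≤ #{i | c i ω ∈ M}} ⊆ ⋃ S ∈ powersetCard k univ, ⋂ i ∈ S, c i ⁻¹' M := by
    intro ω hω
    obtain ⟨S, hS, hSk⟩ := exists_subset_card_eq hω
    simp only [Set.mem_iUnion, Set.mem_iInter]
    exact ⟨S, mem_powersetCard_univ.2 hSk, fun i hi => (mem_filter.1 (hS hi)).2⟩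
  calc μ {ω | k ≤ #{i | c i ω ∈ M}}
      ≤ ∑ S ∈ powersetCard k univ, μ (⋂ i ∈ S, c i ⁻¹' M) :=
        (measure_mono hcover).trans (measure_biUnion_finset_le _ _)
    _ = ∑ S ∈ powersetCard k univ, ∏ i ∈ S, μ (c i ⁻¹' M) :=
        sum_congr rfl fun S _ => hc.measure_inter_preimage_eq_mul S fun _ _ => hM
    _ ≤ ∑ S ∈ powersetCard k (univ : Finset ι), p ^ k := by
        gcongr with S hS
        rw [← (mem_powersetCard_univ.1 hS)]
        exact prod_le_pow_card _ _ _ fun i _ => hp i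
    _ = (Fintype.card ι).choose k * p ^ k := by
        rw [sum_const, card_powersetCard, card_univ, nsmul_eq_mul]

lemma ofReal_one_sub_le_of_measure_compl_le [IsProbabilityMeasure μ] {s : Set Ω} {p : ℝ}
    (hp : 0 ≤ p) (hs : μ sᶜ ≤ ENNReal.ofReal p) : ENNReal.ofReal (1 - p) ≤ μ s := by
  rw [ENNReal.ofReal_sub _ hp, ENNReal.ofReal_one, tsub_le_iff_right]
  calc 1 = μ (s ∪ sᶜ) := by simp
    _ ≤ μ s + μ sᶜ := measure_union_le _ _
    _ ≤ μ s + ENNReal.ofReal p := by gcongr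

end Probability

theorem random_function_preimage_bound_general {n : ℕ}
    (Ω : Type) [MeasurableSpace Ω] (μ : Measure Ω) [IsProbabilityMeasure μ]
    (c : Fin n → Ω → Fin n)
    (hindep : iIndepFun c μ)
    (hunif : ∀ i j, μ {ω | c i ω = j} = ((n : ENNReal))⁻¹) :
    ENNReal.ofReal (1 - 1 / n) ≤
      μ {ω | ∀ M : Finset (Fin n), M.Nonempty →
        ((Finset.univ.filter fun i => c i ω ∈ M).card : ℝ)
          ≤ 4 * M.card * Real.log (Real.exp 1 * n / M.card)} := by
  set k : Finset (Fin n) → ℕ := fun M => preimageCardThreshold n #M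
  have hbad (M : Finset (Fin n)) : μ {ω | k M ≤ #{i | c i ω ∈ (M : Set (Fin n))}} ≤
      ENNReal.ofReal (n.choose (k M) * (#M / n) ^ k M) := by
    have hp (i : Fin n) : μ (c i ⁻¹' M) ≤ ENNReal.ofReal (#M / n) := by
      rw [ENNReal.ofReal_div_of_pos (by have := i.pos; positivity)]
      simpa [div_eq_mul_inv] using measure_preimage_finset_le (c i) M fun j => (hunif i j).le
    rw [ENNReal.ofReal_mul (by positivity), ENNReal.ofReal_pow (by positivity),
      ENNReal.ofReal_natCast]
    simpa using hindep.measure_le_card_filter_mem_le M.measurableSet hp (k M)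
  refine ofReal_one_sub_le_of_measure_compl_le (by positivity) ?_
  calc _ ≤ μ (⋃ M : Finset (Fin n), {ω | k M ≤ #{i | c i ω ∈ (M : Set (Fin n))}}) := by
        refine measure_mono fun ω hω => ?_
        simp only [Set.mem_compl_iff, Set.mem_ofPred_eq, not_forall, not_le] at hω
        obtain ⟨M, hM, hlt⟩ := hω
        refine Set.mem_iUnion.2 ⟨M, ?_⟩
        simpa using preimageCardThreshold_le hM.card_pos (card_le_univ M |>.trans_eq (by simp)) hlt
    _ ≤ ∑ M : Finset (Fin n), μ {ω | k M ≤ #{i | c i ω ∈ (M : Set (Fin n))}} :=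
        measure_iUnion_fintype_le _ _
    _ ≤ ∑ M : Finset (Fin n), ENNReal.ofReal (n.choose (k M) * (#M / n) ^ k M) :=
        sum_le_sum fun M _ => hbad M
    _ = ENNReal.ofReal (∑ M : Finset (Fin n), n.choose (k M) * (#M / n) ^ k M) :=
        (ENNReal.ofReal_sum_of_nonneg fun _ _ => by positivity).symm
    _ ≤ ENNReal.ofReal (1 / n) := ENNReal.ofReal_le_ofReal (sum_choose_preimageCardThreshold_le n)

theorem random_function_preimage_bound {n : ℕ} (hn : 1 ≤ n)
    (Ω : Type) [MeasurableSpace Ω] (μ : Measure Ω) [IsProbabilityMeasure μ]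
    (c : Fin n → Ω → Fin n) (hmeas : ∀ i, Measurable (c i))
    (hindep : iIndepFun c μ)
    (hunif : ∀ i j, μ {ω | c i ω = j} = ((n : ENNReal))⁻¹) :
    ENNReal.ofReal (1 - 1 / n) ≤
      μ {ω | ∀ M : Finset (Fin n), M.Nonempty →
        ((Finset.univ.filter fun i => c i ω ∈ M).card : ℝ)
          ≤ 4 * M.card * Real.log (Real.exp 1 * n / M.card)} :=
  random_function_preimage_bound_general Ω μ c hindep hunif
end

section
/- Let V ⊆ ℝⁿ be a vector subspace and define Δ(V) = sup over unit vectors v ∈ V of √n/‖v‖₁. Then (1) if V is (m, ρ)-spread then Δ(V) ≤ (1/ρ²)·√(n/m), and (2) V is (n/(2Δ(V)²), 1/(4Δ(V)))-spread. -/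
open Finset

section Norms

variable {ι : Type*} (s : Finset ι) (v : ι → ℝ)

lemma sqrt_sum_sq_le_sum_abs : √(∑ i ∈ s, v i ^ 2) ≤ ∑ i ∈ s, |v i| := by
  refine Real.sqrt_le_iff.2 ⟨sum_nonneg fun i _ => abs_nonneg _, ?_⟩
  simpa only [sq_abs] using sum_sq_le_sq_sum_of_nonneg fun i _ => abs_nonneg (v i)

lemma sum_abs_le_sqrt_card_mul_sqrt_sum_sq :
    ∑ i ∈ s, |v i| ≤ √(#s : ℝ) * √(∑ i ∈ s, v i ^ 2) := by
  rw [← Real.sqrt_mul (Nat.cast_nonneg _)]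
  refine Real.le_sqrt_of_sq_le ?_
  simpa only [sq_abs] using sq_sum_le_card_mul_sum_sq (s := s) (f := fun i => |v i|)

lemma sqrt_sum_sq_le_of_subset {t : Finset ι} (hst : s ⊆ t) :
    √(∑ i ∈ s, v i ^ 2) ≤ √(∑ i ∈ t, v i ^ 2) :=
  Real.sqrt_le_sqrt (sum_le_sum_of_subset_of_nonneg hst fun _ _ _ => sq_nonneg _)

lemma mul_sum_abs_le_sqrt_mul_sqrt_sum_sq {t : Finset ι} (hst : s ⊆ t) {c N : ℝ} (hc : 0 ≤ c)
    (hN : c ^ 2 * #s ≤ N) : c * ∑ i ∈ s, |v i| ≤ √N * √(∑ i ∈ t, v i ^ 2) :=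
  calc c * ∑ i ∈ s, |v i| ≤ c * (√(#s : ℝ) * √(∑ i ∈ t, v i ^ 2)) := by
        gcongr
        exact (sum_abs_le_sqrt_card_mul_sqrt_sum_sq s v).trans
          (mul_le_mul_of_nonneg_left (sqrt_sum_sq_le_of_subset s v hst) (Real.sqrt_nonneg _))
    _ = √(c ^ 2 * #s) * √(∑ i ∈ t, v i ^ 2) := by
        rw [Real.sqrt_mul (sq_nonneg c), Real.sqrt_sq hc, mul_assoc]
    _ ≤ √N * √(∑ i ∈ t, v i ^ 2) := by gcongr

variable {θ : ℝ}

lemma mul_card_filter_le_sum_abs : θ * #{i ∈ s | θ ≤ |v i|} ≤ ∑ i ∈ s, |v i| :=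
  calc θ * #{i ∈ s | θ ≤ |v i|} = ∑ _i ∈ {i ∈ s | θ ≤ |v i|}, θ := by
        rw [sum_const, nsmul_eq_mul, mul_comm]
    _ ≤ ∑ i ∈ s with θ ≤ |v i|, |v i| := sum_le_sum fun i hi => (mem_filter.1 hi).2
    _ ≤ ∑ i ∈ s, |v i| :=
        sum_le_sum_of_subset_of_nonneg (filter_subset _ _) fun i _ _ => abs_nonneg _

lemma sum_sq_le_mul_sum_abs_of_abs_le (h : ∀ i ∈ s, |v i| ≤ θ) :
    ∑ i ∈ s, v i ^ 2 ≤ θ * ∑ i ∈ s, |v i| := by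
  rw [mul_sum]
  refine sum_le_sum fun i hi => ?_
  rw [← sq_abs, sq]
  exact mul_le_mul_of_nonneg_right (h i hi) (abs_nonneg _)

end Norms

namespace IsSpread

variable {n : ℕ} {V : Submodule ℝ (Fin n → ℝ)} {m ρ : ℝ} {v : Fin n → ℝ}

lemma le_one (h : IsSpread V m ρ) (hm : 0 ≤ m) (hv : v ∈ V) (hv1 : ∑ i, v i ^ 2 = 1) :
    ρ ≤ 1 := by
  simpa [hv1] using h v hv univ (by simpa using hm)

lemma mul_sqrt_le_sum_abs (h : IsSpread V m ρ) (hm : 0 < m) (hρ : 0 < ρ) (hv : v ∈ V)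
    (hv1 : ∑ i, v i ^ 2 = 1) : ρ * √m ≤ ∑ i, |v i| := by
  have hsm : 0 < √m := Real.sqrt_pos.2 hm
  set θ := ρ / √m with hθ
  set T : Finset (Fin n) := {i | θ ≤ |v i|}
  by_cases hT : (#T : ℝ) ≤ m
  · have hcard : (n : ℝ) - m ≤ #Tᶜ := by
      rw [card_compl, Fintype.card_fin, Nat.cast_sub (by simpa using card_le_univ T)]
      linarith
    have hρT : ρ ≤ √(∑ i ∈ Tᶜ, v i ^ 2) := by simpa [hv1] using h v hv Tᶜ hcard
    have hsmall : ∀ i ∈ Tᶜ, |v i| ≤ θ := fun i hi =>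
      (not_le.1 (by simpa [T] using hi)).le
    have : ρ ^ 2 ≤ θ * ∑ i, |v i| :=
      calc ρ ^ 2 ≤ ∑ i ∈ Tᶜ, v i ^ 2 := Real.le_sqrt' hρ |>.1 hρT
        _ ≤ θ * ∑ i ∈ Tᶜ, |v i| := sum_sq_le_mul_sum_abs_of_abs_le _ _ hsmall
        _ ≤ θ * ∑ i, |v i| := mul_le_mul_of_nonneg_left
          (sum_le_sum_of_subset_of_nonneg (subset_univ _) fun i _ _ => abs_nonneg (v i))
          (div_pos hρ hsm).le
    rw [hθ, div_mul_eq_mul_div, le_div_iff₀ hsm, sq, mul_assoc] at this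
    exact le_of_mul_le_mul_left this hρ
  · calc ρ * √m = θ * m := by
          rw [hθ, div_mul_eq_mul_div, eq_div_iff hsm.ne', mul_assoc, Real.mul_self_sqrt hm.le]
      _ ≤ θ * #T := by gcongr; linarith
      _ ≤ ∑ i, |v i| := mul_card_filter_le_sum_abs _ _

end IsSpread

section Distortion

variable {n : ℕ} (V : Submodule ℝ (Fin n → ℝ))

noncomputable def distortion : ℝ :=
  sSup {x : ℝ | ∃ v ∈ V, (∑ i, v i ^ 2 = 1) ∧ x = √n / ∑ i, |v i|}

lemma distortion_nonneg : 0 ≤ distortion V :=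
  Real.sSup_nonneg fun _ ⟨_, _, _, hx⟩ => hx ▸ by positivity

variable {V} {v : Fin n → ℝ}

lemma sqrt_card_div_sum_abs_le_distortion (hv : v ∈ V) (hv1 : ∑ i, v i ^ 2 = 1) :
    √n / ∑ i, |v i| ≤ distortion V := by
  refine le_csSup ⟨√n, ?_⟩ ⟨v, hv, hv1, rfl⟩
  rintro _ ⟨w, -, hw1, rfl⟩
  refine div_le_self (Real.sqrt_nonneg _) ?_
  simpa [hw1] using sqrt_sum_sq_le_sum_abs univ w

lemma sqrt_card_mul_sqrt_sum_sq_le_distortion_mul (hv : v ∈ V) :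
    √n * √(∑ i, v i ^ 2) ≤ distortion V * ∑ i, |v i| := by
  rcases (Real.sqrt_nonneg (∑ i, v i ^ 2)).eq_or_lt with ha | ha
  · rw [← ha, mul_zero]
    exact mul_nonneg (distortion_nonneg V) (sum_nonneg fun i _ => abs_nonneg (v i))
  set a := √(∑ i, v i ^ 2) with ha_def
  have hu1 : ∑ i, (a⁻¹ • v) i ^ 2 = 1 := by
    simp only [Pi.smul_apply, smul_eq_mul, mul_pow, ← mul_sum, inv_pow, ha_def,
      Real.sq_sqrt (sum_nonneg fun i _ => sq_nonneg (v i))]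
    exact inv_mul_cancel₀ (Real.sqrt_pos.1 ha).ne'
  have hL : ∑ i, |(a⁻¹ • v) i| = a⁻¹ * ∑ i, |v i| := by
    simp only [Pi.smul_apply, smul_eq_mul, abs_mul, abs_inv, abs_of_pos ha, mul_sum]
  have hLpos : 0 < ∑ i, |v i| := ha.trans_le (sqrt_sum_sq_le_sum_abs univ v)
  have := sqrt_card_div_sum_abs_le_distortion (V.smul_mem a⁻¹ hv) hu1
  rwa [hL, div_le_iff₀ (by positivity), mul_left_comm, ← div_eq_inv_mul,
    le_div_iff₀ ha] at this

lemma one_le_distortion (hv : v ∈ V) (hv0 : v ≠ 0) : 1 ≤ distortion V := by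
  obtain ⟨i, hi⟩ := Function.ne_iff.1 hv0
  have hpos : 0 < √n * √(∑ j, v j ^ 2) := mul_pos (Real.sqrt_pos.2 (by exact_mod_cast i.pos))
    (Real.sqrt_pos.2 ((pow_pos (abs_pos.2 hi) 2).trans_le (by
      simpa only [sq_abs] using single_le_sum (fun j _ => sq_nonneg (v j)) (mem_univ i))))
  have hL : ∑ j, |v j| ≤ √n * √(∑ j, v j ^ 2) := by
    simpa using sum_abs_le_sqrt_card_mul_sqrt_sum_sq univ v
  have := (sqrt_card_mul_sqrt_sum_sq_le_distortion_mul hv).trans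
    (mul_le_mul_of_nonneg_left hL (distortion_nonneg V))
  exact one_le_of_le_mul_left₀ hpos (by rwa [mul_comm (distortion V)] at this)


lemma distortion_le_of_isSpread {m ρ : ℝ} (hm : 0 < m) (hρ : 0 < ρ) (h : IsSpread V m ρ) :
    distortion V ≤ 1 / ρ ^ 2 * √(n / m) := by
  refine Real.sSup_le ?_ (by positivity)
  rintro _ ⟨v, hv, hv1, rfl⟩
  have hρ1 := h.le_one hm.le hv hv1
  calc √n / ∑ i, |v i| ≤ √n / (ρ * √m) := by
        gcongr
        exact h.mul_sqrt_le_sum_abs hm hρ hv hv1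
    _ = 1 / ρ * √(n / m) := by rw [Real.sqrt_div' _ hm.le]; field_simp
    _ ≤ 1 / ρ ^ 2 * √(n / m) := by
        gcongr
        exact pow_le_of_le_one hρ.le hρ1 two_ne_zero

lemma isSpread_distortion : IsSpread V (n / (2 * distortion V ^ 2)) (1 / (4 * distortion V)) := by
  intro v hv S hS
  rcases eq_or_ne v 0 with rfl | hv0
  · simp
  set Δ := distortion V
  have hΔ : 1 ≤ Δ := one_le_distortion hv hv0
  have hn : 0 < √n := Real.sqrt_pos.2 (by exact_mod_cast (Function.ne_iff.1 hv0).choose.pos)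
  set a := √(∑ i, v i ^ 2)
  set b := √(∑ i ∈ S, v i ^ 2)
  have hon : ∑ i ∈ S, |v i| ≤ √n * b := by
    simpa using mul_sum_abs_le_sqrt_mul_sqrt_sum_sq S v subset_rfl zero_le_one
      (by simpa using card_le_univ S)
  have hoff : √2 * Δ * ∑ i ∈ Sᶜ, |v i| ≤ √n * a := by
    refine mul_sum_abs_le_sqrt_mul_sqrt_sum_sq Sᶜ v (subset_univ _) (by positivity) ?_
    rw [mul_pow, Real.sq_sqrt zero_le_two, card_compl, Fintype.card_fin,
      Nat.cast_sub (by simpa using card_le_univ S), mul_comm, ← le_div_iff₀ (by positivity)]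
    linarith
  have hmain : √n * a ≤ Δ * (∑ i ∈ S, |v i| + ∑ i ∈ Sᶜ, |v i|) := by
    rw [sum_add_sum_compl S fun i => |v i|]
    exact sqrt_card_mul_sqrt_sum_sq_le_distortion_mul hv
  have hsqrt2 : 4 / 3 * (Δ * ∑ i ∈ Sᶜ, |v i|) ≤ √2 * (Δ * ∑ i ∈ Sᶜ, |v i|) := by
    gcongr
    exact Real.le_sqrt_of_sq_le (by norm_num)
  have key : √n * a ≤ √n * (4 * Δ * b) := by
    linarith [mul_le_mul_of_nonneg_left hon (by linarith : (0 : ℝ) ≤ Δ)]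
  rw [div_mul_eq_mul_div, one_mul, div_le_iff₀ (by positivity)]
  linarith [le_of_mul_le_mul_left key hn]

end Distortion

theorem spread_vs_distortion {n : ℕ} (V : Submodule ℝ (Fin n → ℝ)) (Δ : ℝ)
    (hΔ : Δ = sSup {x : ℝ | ∃ v ∈ V, (∑ i, v i ^ 2 = 1) ∧
      x = Real.sqrt n / ∑ i, |v i|}) :
    (∀ m ρ : ℝ, 0 < m → 0 < ρ → IsSpread V m ρ →
      Δ ≤ 1 / ρ ^ 2 * Real.sqrt ((n : ℝ) / m)) ∧
    IsSpread V ((n : ℝ) / (2 * Δ ^ 2)) (1 / (4 * Δ)) := by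
  change Δ = distortion V at hΔ
  subst hΔ
  exact ⟨fun _ _ hm hρ h => distortion_le_of_isSpread hm hρ h, isSpread_distortion⟩
end
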